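/- arXiv:2307.04270 — 8 statements merged into one kernel-verified Lean document; each statement's English description precedes it below -/
import Mathlib

section
/- Let t and t' be ring terms in n variables (containing no ⊥ and no division). Then E_wcr,⊥ ⊢ t = t' if and only if for every field F and every valuation σ : Fin n → Option F, the evaluations of t and t' in the ⊥-enlargement of F are equal. (E_wcr,⊥ is a complete axiomatisation of the sumterm calculus of fields equipped with ⊥, equivalently of the sumterm calculus of common meadows.) -/
universe u

/-- Ring-with-`⊥` terms in `n` variables: variables, constants `0`, `1` and `⊥`,
negation, addition and multiplication.  Terms avoiding the constructor `bot`
are the ring terms. -/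
inductive RTerm (n : ℕ) : Type where
  | var : Fin n → RTerm n
  | zero : RTerm n
  | one : RTerm n
  | bot : RTerm n
  | neg : RTerm n → RTerm n
  | add : RTerm n → RTerm n → RTerm n
  | mul : RTerm n → RTerm n → RTerm n

namespace RTerm

/-- Addition on the `⊥`-enlargement `Option R` of a commutative ring `R`. -/
def bAdd {R : Type u} [CommRing R] : Option R → Option R → Option R
  | some a, some b => some (a + b)
  | _, _ => none

/-- Multiplication on the `⊥`-enlargement `Option R` of a commutative ring `R`. -/
def bMul {R : Type u} [CommRing R] : Option R → Option R → Option R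
  | some a, some b => some (a * b)
  | _, _ => none

/-- Negation on the `⊥`-enlargement `Option R` of a commutative ring `R`. -/
def bNeg {R : Type u} [CommRing R] : Option R → Option R
  | some a => some (-a)
  | none => none

/-- Evaluation of a ring-with-`⊥` term in the `⊥`-enlargement `Option R` of a
commutative ring `R`, under a valuation `σ : Fin n → Option R`. -/
def evalB {n : ℕ} {R : Type u} [CommRing R] (σ : Fin n → Option R) :
    RTerm n → Option R
  | var i => σ i
  | zero => some 0
  | one => some 1
  | bot => none
  | neg t => bNeg (t.evalB σ)
  | add t s => bAdd (t.evalB σ) (s.evalB σ)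
  | mul t s => bMul (t.evalB σ) (s.evalB σ)

/-- Derivability in equational logic from the axioms `E_wcr,⊥`: the least relation
containing all substitution instances of the eleven axioms that is reflexive,
symmetric, transitive and closed under the term-forming operations. -/
inductive DerivWcr {n : ℕ} : RTerm n → RTerm n → Prop
  | add_assoc (x y z : RTerm n) : DerivWcr ((x.add y).add z) (x.add (y.add z))
  | add_comm (x y : RTerm n) : DerivWcr (x.add y) (y.add x)
  | add_zero (x : RTerm n) : DerivWcr (x.add zero) x
  | add_neg (x : RTerm n) : DerivWcr (x.add x.neg) (zero.mul x)
  | mul_assoc (x y z : RTerm n) : DerivWcr (x.mul (y.mul z)) ((x.mul y).mul z)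
  | mul_comm (x y : RTerm n) : DerivWcr (x.mul y) (y.mul x)
  | one_mul (x : RTerm n) : DerivWcr (one.mul x) x
  | mul_add (x y z : RTerm n) : DerivWcr (x.mul (y.add z)) ((x.mul y).add (x.mul z))
  | neg_neg (x : RTerm n) : DerivWcr x.neg.neg x
  | zero_mul_add (x y : RTerm n) : DerivWcr (zero.mul (x.add y)) (zero.mul (x.mul y))
  | add_bot (x : RTerm n) : DerivWcr (x.add bot) bot
  | refl (x : RTerm n) : DerivWcr x x
  | symm {x y : RTerm n} : DerivWcr x y → DerivWcr y x
  | trans {x y z : RTerm n} : DerivWcr x y → DerivWcr y z → DerivWcr x z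
  | neg_congr {x y : RTerm n} : DerivWcr x y → DerivWcr x.neg y.neg
  | add_congr {x x' y y' : RTerm n} :
      DerivWcr x x' → DerivWcr y y' → DerivWcr (x.add y) (x'.add y')
  | mul_congr {x x' y y' : RTerm n} :
      DerivWcr x x' → DerivWcr y y' → DerivWcr (x.mul y) (x'.mul y')

/-- A ring-with-`⊥` term is `⊥`-free (i.e. a ring term) if it contains no
occurrence of the constant `⊥`. -/
def BotFree {n : ℕ} : RTerm n → Prop
  | var _ => True
  | zero => True
  | one => True
  | bot => False
  | neg t => BotFree t
  | add t s => BotFree t ∧ BotFree s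
  | mul t s => BotFree t ∧ BotFree s

end RTerm

/-!
Soundness is a routine induction on derivations. For completeness, fix a `⊥`-free term `z`. The
terms `u` with `0·u + 0·z = 0·z` derivable (those defined wherever `z` is), identified when
`u + 0·z = v + 0·z` is derivable, form a commutative ring in which every term evaluates to its own
class under the valuation `xᵢ ↦ [xᵢ]`. If `t` and `t'` agree in the `⊥`-enlargement of every
field, then they have the same variables (make one variable `⊥`) and denote the same integer
polynomial (evaluate in the fraction field of `ℤ[X]`). Evaluating that polynomial in the ring for
`z = t` gives `t + 0·t = t' + 0·t`, and `0·t = 0·t'` because both terms have the same variables.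
-/

namespace RTerm

variable {n : ℕ}

instance : Zero (RTerm n) := ⟨zero⟩
instance : One (RTerm n) := ⟨one⟩
instance : Neg (RTerm n) := ⟨neg⟩
instance : Add (RTerm n) := ⟨add⟩
instance : Mul (RTerm n) := ⟨mul⟩

def vars : RTerm n → Finset (Fin n)
  | var i => {i}
  | zero | one | bot => ∅
  | neg t => t.vars
  | add t s | mul t s => t.vars ∪ s.vars

/-- Evaluation in a commutative ring, sending `⊥` to the junk value `0`. -/
def evalR {R : Type*} [CommRing R] (τ : Fin n → R) : RTerm n → R
  | var i => τ i
  | zero => 0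
  | one => 1
  | bot => 0
  | neg t => -evalR τ t
  | add t s => evalR τ t + evalR τ s
  | mul t s => evalR τ t * evalR τ s

theorem evalB_eq_of_derivWcr {R : Type*} [CommRing R] {t t' : RTerm n} (h : DerivWcr t t')
    (σ : Fin n → Option R) : t.evalB σ = t'.evalB σ := by
  induction h with
  | add_assoc x y z | mul_assoc x y z | mul_add x y z =>
    simp only [evalB]
    cases x.evalB σ <;> cases y.evalB σ <;> cases z.evalB σ <;>
      simp [bAdd, bMul, add_assoc, mul_assoc, mul_add]
  | add_comm x y | mul_comm x y | zero_mul_add x y =>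
    simp only [evalB]
    cases x.evalB σ <;> cases y.evalB σ <;> simp [bAdd, bMul, add_comm, mul_comm]
  | add_zero x | add_neg x | one_mul x | neg_neg x | add_bot x =>
    simp only [evalB]
    cases x.evalB σ <;> simp [bAdd, bMul, bNeg]
  | refl => rfl
  | symm _ ih => exact ih.symm
  | trans _ _ ih₁ ih₂ => exact ih₁.trans ih₂
  | neg_congr _ ih => simp only [evalB, ih]
  | add_congr _ _ ih₁ ih₂ => simp only [evalB, ih₁, ih₂]
  | mul_congr _ _ ih₁ ih₂ => simp only [evalB, ih₁, ih₂]

theorem bAdd_eq_none {R : Type*} [CommRing R] {a b : Option R} :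
    bAdd a b = none ↔ a = none ∨ b = none := by
  cases a <;> cases b <;> simp [bAdd]

theorem bMul_eq_none {R : Type*} [CommRing R] {a b : Option R} :
    bMul a b = none ↔ a = none ∨ b = none := by
  cases a <;> cases b <;> simp [bMul]

theorem bNeg_eq_none {R : Type*} [CommRing R] {a : Option R} : bNeg a = none ↔ a = none := by
  cases a <;> simp [bNeg]

theorem evalB_eq_none_iff {R : Type*} [CommRing R] {t : RTerm n} (ht : BotFree t)
    (σ : Fin n → Option R) : t.evalB σ = none ↔ ∃ i ∈ t.vars, σ i = none := by
  induction t with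
  | var i => simp [evalB, vars]
  | zero | one => simp [evalB, vars]
  | bot => exact ht.elim
  | neg a ih => simpa [evalB, vars, bNeg_eq_none] using ih ht
  | add a b iha ihb =>
    simp [evalB, vars, bAdd_eq_none, iha ht.1, ihb ht.2, or_and_right, exists_or]
  | mul a b iha ihb =>
    simp [evalB, vars, bMul_eq_none, iha ht.1, ihb ht.2, or_and_right, exists_or]

theorem evalB_some {R : Type*} [CommRing R] (τ : Fin n → R) {t : RTerm n} (ht : BotFree t) :
    t.evalB (fun i => some (τ i)) = some (evalR τ t) := by
  induction t with
  | var | zero | one => rfl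
  | bot => exact ht.elim
  | neg a ih => simp [evalB, evalR, bNeg, ih ht]
  | add a b iha ihb => simp [evalB, evalR, bAdd, iha ht.1, ihb ht.2]
  | mul a b iha ihb => simp [evalB, evalR, bMul, iha ht.1, ihb ht.2]

theorem map_evalR {R S F : Type*} [CommRing R] [CommRing S] [FunLike F R S] [RingHomClass F R S]
    (f : F) (τ : Fin n → R) (t : RTerm n) : f (evalR τ t) = evalR (fun i => f (τ i)) t := by
  induction t with
  | var => rfl
  | zero | one | bot => simp [evalR]
  | neg a ih => simp [evalR, ih]
  | add a b iha ihb => simp [evalR, iha, ihb]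
  | mul a b iha ihb => simp [evalR, iha, ihb]

theorem vars_eq_of_evalB_eq {R : Type*} [CommRing R] {t t' : RTerm n} (ht : BotFree t)
    (ht' : BotFree t') (h : ∀ σ : Fin n → Option R, t.evalB σ = t'.evalB σ) :
    t.vars = t'.vars := by
  classical
  ext j
  let σ : Fin n → Option R := fun i => if i = j then none else some 0
  have hσ (s : RTerm n) (hs : BotFree s) : s.evalB σ = none ↔ j ∈ s.vars := by
    simp [σ, evalB_eq_none_iff hs]
  rw [← hσ t ht, ← hσ t' ht', h]

local infix:50 " ∼ " => DerivWcr

instance : Trans (@DerivWcr n) (@DerivWcr n) (@DerivWcr n) := ⟨DerivWcr.trans⟩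

namespace DerivWcr

variable {x y z : RTerm n}

theorem add_right (h : x ∼ y) : x + z ∼ y + z := add_congr h (refl z)
theorem add_left (h : x ∼ y) : z + x ∼ z + y := add_congr (refl z) h
theorem mul_right (h : x ∼ y) : x * z ∼ y * z := mul_congr h (refl z)
theorem mul_left (h : x ∼ y) : z * x ∼ z * y := mul_congr (refl z) h

theorem zero_add (x : RTerm n) : 0 + x ∼ x := (add_comm 0 x).trans (add_zero x)
theorem mul_one (x : RTerm n) : x * 1 ∼ x := (mul_comm x 1).trans (one_mul x)

theorem add_zero_mul_self (x : RTerm n) : x + 0 * x ∼ x :=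
  calc x + 0 * x ∼ x * 1 + x * 0 := add_congr (mul_one x).symm (mul_comm 0 x)
    _ ∼ x * (1 + 0) := (mul_add x 1 0).symm
    _ ∼ x * 1 := mul_left (add_zero 1)
    _ ∼ x := mul_one x

theorem zero_mul_add_self (x : RTerm n) : 0 * x + 0 * x ∼ 0 * x :=
  calc 0 * x + 0 * x ∼ x * 0 + x * 0 := add_congr (mul_comm 0 x) (mul_comm 0 x)
    _ ∼ x * (0 + 0) := (mul_add x 0 0).symm
    _ ∼ x * 0 := mul_left (add_zero 0)
    _ ∼ 0 * x := mul_comm x 0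

theorem zero_mul_zero : (0 : RTerm n) * 0 ∼ 0 := (zero_add _).symm.trans (add_zero_mul_self 0)

theorem zero_mul_mul (x y : RTerm n) : 0 * (x * y) ∼ 0 * x + 0 * y :=
  (zero_mul_add x y).symm.trans (mul_add 0 x y)

theorem zero_mul_add_zero_mul_neg (x : RTerm n) : 0 * x + 0 * -x ∼ 0 * x :=
  calc 0 * x + 0 * -x ∼ 0 * (x + -x) := (mul_add 0 x (-x)).symm
    _ ∼ 0 * (0 * x) := mul_left (add_neg x)
    _ ∼ 0 * 0 * x := mul_assoc 0 0 x
    _ ∼ 0 * x := mul_right zero_mul_zero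

theorem zero_mul_neg (x : RTerm n) : 0 * -x ∼ 0 * x :=
  calc 0 * -x ∼ 0 * -x + 0 * - -x := (zero_mul_add_zero_mul_neg (-x)).symm
    _ ∼ 0 * -x + 0 * x := add_left (mul_left (neg_neg x))
    _ ∼ 0 * x + 0 * -x := add_comm _ _
    _ ∼ 0 * x := zero_mul_add_zero_mul_neg x

theorem neg_one_mul_add_self (x : RTerm n) : -1 * x + x ∼ 0 * x :=
  calc -1 * x + x ∼ x * 1 + x * -1 :=
        (add_comm _ _).trans (add_congr (mul_one x).symm (mul_comm _ _))
    _ ∼ x * (1 + -1) := (mul_add x 1 (-1)).symm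
    _ ∼ x * (0 * 1) := mul_left (add_neg 1)
    _ ∼ x * 0 := mul_left (mul_one 0)
    _ ∼ 0 * x := mul_comm x 0

theorem add_add_zero_mul (x y z : RTerm n) : x + y + 0 * z ∼ (x + 0 * z) + (y + 0 * z) :=
  calc x + y + 0 * z ∼ x + y + (0 * z + 0 * z) := add_left (zero_mul_add_self z).symm
    _ ∼ x + y + 0 * z + 0 * z := (add_assoc _ _ _).symm
    _ ∼ x + (y + 0 * z) + 0 * z := add_right (add_assoc x y _)
    _ ∼ x + ((y + 0 * z) + 0 * z) := add_assoc _ _ _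
    _ ∼ x + (0 * z + (y + 0 * z)) := add_left (add_comm _ _)
    _ ∼ (x + 0 * z) + (y + 0 * z) := (add_assoc _ _ _).symm

end DerivWcr

/-- `u` is defined wherever `z` is: `0·x` evaluates to `0` where `x` is defined and to `⊥`
elsewhere. -/
def DefLE (u z : RTerm n) : Prop := 0 * u + 0 * z ∼ 0 * z

namespace DefLE

open DerivWcr

variable {a b u w z : RTerm n}

theorem refl (z : RTerm n) : DefLE z z := zero_mul_add_self z

theorem trans (h₁ : DefLE u w) (h₂ : DefLE w z) : DefLE u z :=
  calc 0 * u + 0 * z ∼ 0 * u + (0 * w + 0 * z) := add_left h₂.symm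
    _ ∼ 0 * u + 0 * w + 0 * z := (add_assoc _ _ _).symm
    _ ∼ 0 * w + 0 * z := add_right h₁
    _ ∼ 0 * z := h₂

theorem antisymm (h₁ : DefLE u z) (h₂ : DefLE z u) : 0 * u ∼ 0 * z :=
  calc 0 * u ∼ 0 * z + 0 * u := h₂.symm
    _ ∼ 0 * u + 0 * z := add_comm _ _
    _ ∼ 0 * z := h₁

theorem of_zero_mul (h : 0 * u ∼ 0 * a + 0 * b) (ha : DefLE a z) (hb : DefLE b z) : DefLE u z :=
  calc 0 * u + 0 * z ∼ 0 * a + 0 * b + 0 * z := add_right h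
    _ ∼ 0 * a + (0 * b + 0 * z) := add_assoc _ _ _
    _ ∼ 0 * a + 0 * z := add_left hb
    _ ∼ 0 * z := ha

theorem left_of_zero_mul (h : 0 * z ∼ 0 * a + 0 * b) : DefLE a z :=
  calc 0 * a + 0 * z ∼ 0 * a + (0 * a + 0 * b) := add_left h
    _ ∼ 0 * a + 0 * a + 0 * b := (add_assoc _ _ _).symm
    _ ∼ 0 * a + 0 * b := add_right (zero_mul_add_self a)
    _ ∼ 0 * z := h.symm

theorem right_of_zero_mul (h : 0 * z ∼ 0 * a + 0 * b) : DefLE b z :=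
  left_of_zero_mul (h.trans (add_comm _ _))

theorem zero : DefLE 0 z := (add_right zero_mul_zero).trans (DerivWcr.zero_add _)
theorem one : DefLE 1 z := (add_right (DerivWcr.mul_one 0)).trans (DerivWcr.zero_add _)
theorem neg (h : DefLE a z) : DefLE (-a) z := (add_right (zero_mul_neg a)).trans h
theorem add (ha : DefLE a z) (hb : DefLE b z) : DefLE (a + b) z := of_zero_mul (mul_add 0 a b) ha hb
theorem mul (ha : DefLE a z) (hb : DefLE b z) : DefLE (a * b) z :=
  of_zero_mul (zero_mul_mul a b) ha hb

theorem self_neg : DefLE a (-a) :=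
  calc 0 * a + 0 * -a ∼ 0 * a + 0 * a := add_left (zero_mul_neg a)
    _ ∼ 0 * a := zero_mul_add_self a
    _ ∼ 0 * -a := (zero_mul_neg a).symm
theorem left_add : DefLE a (a + b) := left_of_zero_mul (mul_add 0 a b)
theorem right_add : DefLE b (a + b) := right_of_zero_mul (mul_add 0 a b)
theorem left_mul : DefLE a (a * b) := left_of_zero_mul (zero_mul_mul a b)
theorem right_mul : DefLE b (a * b) := right_of_zero_mul (zero_mul_mul a b)

theorem var_of_mem {i : Fin n} (hi : i ∈ z.vars) : DefLE (var i) z := by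
  induction z with
  | var j =>
    obtain rfl : i = j := by simpa [vars] using hi
    exact refl _
  | zero | one | bot => simp [vars] at hi
  | neg a ih => exact (ih hi).trans self_neg
  | add a b iha ihb =>
    rcases Finset.mem_union.mp hi with ha | hb
    exacts [(iha ha).trans left_add, (ihb hb).trans right_add]
  | mul a b iha ihb =>
    rcases Finset.mem_union.mp hi with ha | hb
    exacts [(iha ha).trans left_mul, (ihb hb).trans right_mul]

theorem of_vars_subset (hu : BotFree u) (h : u.vars ⊆ z.vars) : DefLE u z := by
  induction u with
  | var i => exact var_of_mem (h (Finset.mem_singleton_self i))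
  | zero => exact zero
  | one => exact one
  | bot => exact hu.elim
  | neg a ih => exact (ih hu h).neg
  | add a b iha ihb =>
    exact (iha hu.1 (Finset.union_subset_left h)).add (ihb hu.2 (Finset.union_subset_right h))
  | mul a b iha ihb =>
    exact (iha hu.1 (Finset.union_subset_left h)).mul (ihb hu.2 (Finset.union_subset_right h))

theorem add_zero_mul_mul (hb : DefLE b z) (a : RTerm n) :
    (a + 0 * z) * b + 0 * z ∼ a * b + 0 * z :=
  calc (a + 0 * z) * b + 0 * z ∼ b * a + b * (0 * z) + 0 * z :=
        add_right ((mul_comm _ _).trans (mul_add _ _ _))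
    _ ∼ b * a + (b * (0 * z) + 0 * z) := add_assoc _ _ _
    _ ∼ b * a + (0 * (b * z) + 0 * z) := add_left (add_right
        ((mul_assoc b 0 z).trans
          ((mul_right (mul_comm b 0)).trans (mul_assoc 0 b z).symm)))
    _ ∼ b * a + 0 * z := add_left (hb.mul (refl z))
    _ ∼ a * b + 0 * z := add_right (mul_comm b a)

theorem mul_right_of_add_zero_mul {a' c : RTerm n} (hc : DefLE c z)
    (h : a + 0 * z ∼ a' + 0 * z) : a * c + 0 * z ∼ a' * c + 0 * z :=
  calc a * c + 0 * z ∼ (a + 0 * z) * c + 0 * z := (hc.add_zero_mul_mul a).symm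
    _ ∼ (a' + 0 * z) * c + 0 * z := add_right (mul_right h)
    _ ∼ a' * c + 0 * z := hc.add_zero_mul_mul a'

end DefLE

def layerSetoid (z : RTerm n) : Setoid {u : RTerm n // DefLE u z} where
  r u v := u.1 + 0 * z ∼ v.1 + 0 * z
  iseqv := ⟨fun _ => DerivWcr.refl _, DerivWcr.symm, DerivWcr.trans⟩

def Layer (z : RTerm n) : Type := Quotient (layerSetoid z)

namespace Layer

open DerivWcr

variable {z : RTerm n}

def mk (u : RTerm n) (hu : DefLE u z) : Layer z := Quotient.mk _ ⟨u, hu⟩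

theorem mk_eq_mk {u v : RTerm n} {hu : DefLE u z} {hv : DefLE v z} :
    mk u hu = mk v hv ↔ u + 0 * z ∼ v + 0 * z := Quotient.eq

instance : Zero (Layer z) := ⟨mk 0 .zero⟩
instance : One (Layer z) := ⟨mk 1 .one⟩

instance : Add (Layer z) :=
  ⟨Quotient.map₂ (fun u v => ⟨u.1 + v.1, u.2.add v.2⟩) fun _ _ hu _ _ hv =>
    (add_add_zero_mul _ _ _).trans ((add_congr hu hv).trans (add_add_zero_mul _ _ _).symm)⟩

instance : Mul (Layer z) :=
  ⟨Quotient.map₂ (fun u v => ⟨u.1 * v.1, u.2.mul v.2⟩) fun u u' hu v v' hv =>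
    calc u.1 * v.1 + 0 * z ∼ u'.1 * v.1 + 0 * z := v.2.mul_right_of_add_zero_mul hu
      _ ∼ v.1 * u'.1 + 0 * z := add_right (mul_comm _ _)
      _ ∼ v'.1 * u'.1 + 0 * z := u'.2.mul_right_of_add_zero_mul hv
      _ ∼ u'.1 * v'.1 + 0 * z := add_right (mul_comm _ _)⟩

/-- Multiplication by `-1`, which is well defined for free, unlike syntactic negation. -/
instance : Neg (Layer z) := ⟨fun q => mk (-1) DefLE.one.neg * q⟩

instance : CommRing (Layer z) :=
  CommRing.ofMinimalAxioms
    (fun a b c => Quotient.inductionOn₃ a b c fun a b c =>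
      Quotient.sound (add_right (DerivWcr.add_assoc a.1 b.1 c.1)))
    (fun a => Quotient.inductionOn a fun a => Quotient.sound (add_right (DerivWcr.zero_add a.1)))
    (fun a => Quotient.inductionOn a fun a => Quotient.sound <|
      calc -1 * a.1 + a.1 + 0 * z ∼ 0 * a.1 + 0 * z := add_right (neg_one_mul_add_self a.1)
        _ ∼ 0 * z := a.2
        _ ∼ 0 + 0 * z := (DerivWcr.zero_add _).symm)
    (fun a b c => Quotient.inductionOn₃ a b c fun a b c =>
      Quotient.sound (add_right (DerivWcr.mul_assoc a.1 b.1 c.1).symm))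
    (fun a b => Quotient.inductionOn₂ a b fun a b =>
      Quotient.sound (add_right (DerivWcr.mul_comm a.1 b.1)))
    (fun a => Quotient.inductionOn a fun a => Quotient.sound (add_right (DerivWcr.one_mul a.1)))
    (fun a b c => Quotient.inductionOn₃ a b c fun a b c =>
      Quotient.sound (add_right (DerivWcr.mul_add a.1 b.1 c.1)))

theorem mk_neg {u : RTerm n} (hu : DefLE u z) : mk (-u) hu.neg = -mk u hu :=
  (neg_eq_of_add_eq_zero_right <| Quotient.sound <|
    calc u + -u + 0 * z ∼ 0 * u + 0 * z := add_right (add_neg u)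
      _ ∼ 0 * z := hu
      _ ∼ 0 + 0 * z := (DerivWcr.zero_add _).symm).symm

open Classical in
noncomputable def canonicalVal (z : RTerm n) (i : Fin n) : Layer z :=
  if h : DefLE (var i) z then mk (var i) h else 0

theorem evalR_canonicalVal {u : RTerm n} (hu : BotFree u) (h : DefLE u z) :
    evalR (canonicalVal z) u = mk u h := by
  induction u with
  | var i => exact dif_pos h
  | zero | one => rfl
  | bot => exact hu.elim
  | neg a ih =>
    rw [evalR, ih hu (DefLE.self_neg.trans h)]
    exact (mk_neg _).symm
  | add a b iha ihb =>
    rw [evalR, iha hu.1 (DefLE.left_add.trans h), ihb hu.2 (DefLE.right_add.trans h)]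
    rfl
  | mul a b iha ihb =>
    rw [evalR, iha hu.1 (DefLE.left_mul.trans h), ihb hu.2 (DefLE.right_mul.trans h)]
    rfl

end Layer

theorem derivWcr_of_evalR_X_eq {t t' : RTerm n} (ht : BotFree t) (ht' : BotFree t')
    (hvars : t.vars = t'.vars)
    (h : evalR (MvPolynomial.X : Fin n → MvPolynomial (Fin n) ℤ) t = evalR MvPolynomial.X t') :
    t ∼ t' := by
  have h't : DefLE t' t := .of_vars_subset ht' hvars.ge
  have hlayer : Layer.mk t (.refl t) = Layer.mk t' h't := by
    rw [← Layer.evalR_canonicalVal ht, ← Layer.evalR_canonicalVal ht']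
    simpa [map_evalR] using congrArg (MvPolynomial.aeval (Layer.canonicalVal t)) h
  calc t ∼ t + 0 * t := (DerivWcr.add_zero_mul_self t).symm
    _ ∼ t' + 0 * t := Layer.mk_eq_mk.mp hlayer
    _ ∼ t' + 0 * t' := DerivWcr.add_left (h't.antisymm (.of_vars_subset ht hvars.le)).symm
    _ ∼ t' := DerivWcr.add_zero_mul_self t'

end RTerm

open RTerm in
/-- `E_wcr,⊥` is a complete axiomatisation of the sumterm calculus of fields with
`⊥`: for ring terms `t, t'` (no `⊥`, no division), `E_wcr,⊥ ⊢ t = t'` iff `t` and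
`t'` evaluate equally in the `⊥`-enlargement of every field under every valuation. -/
theorem derivWcr_iff_valid_in_all_bot_enlarged_fields (n : ℕ) (t t' : RTerm n)
    (ht : BotFree t) (ht' : BotFree t') :
    DerivWcr t t' ↔
      ∀ (F : Type u) [Field F] (σ : Fin n → Option F), t.evalB σ = t'.evalB σ := by
  refine ⟨fun h F _ σ => evalB_eq_of_derivWcr h σ, fun h => ?_⟩
  let K := ULift.{u} (FractionRing (MvPolynomial (Fin n) ℤ))
  let g : MvPolynomial (Fin n) ℤ →+* K := ULift.ringEquiv.symm.toRingHom.comp (algebraMap _ _)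
  have hg : Function.Injective g :=
    ULift.ringEquiv.symm.injective.comp (IsFractionRing.injective _ _)
  refine derivWcr_of_evalR_X_eq ht ht' (vars_eq_of_evalB_eq ht ht' (h K)) (hg ?_)
  have := h K fun i => some (g (MvPolynomial.X i))
  rwa [evalB_some _ ht, evalB_some _ ht', Option.some_inj, ← map_evalR, ← map_evalR] at this
end

section
/- Fracterm flattening: for every meadow term t in n variables there exist ring terms p and q in n variables (meadow terms containing no occurrence of ⊥ and no occurrence of division) such that E_ftc-cm ⊢ t = p / q, i.e., t is provably equal to a flat fracterm. -/
universe u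

/-- Meadow terms in `n` variables: variables, constants `0`, `1`, `⊥`,
negation, addition, multiplication and division. -/
inductive MTerm (n : ℕ) : Type where
  | var : Fin n → MTerm n
  | zero : MTerm n
  | one : MTerm n
  | bot : MTerm n
  | neg : MTerm n → MTerm n
  | add : MTerm n → MTerm n → MTerm n
  | mul : MTerm n → MTerm n → MTerm n
  | div : MTerm n → MTerm n → MTerm n

namespace MTerm

/-- Addition on the common meadow enlargement `Option F` of a field `F`. -/
def cmAdd {F : Type u} [Field F] : Option F → Option F → Option F
  | some a, some b => some (a + b)
  | _, _ => none

/-- Multiplication on the common meadow enlargement `Option F` of a field `F`. -/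
def cmMul {F : Type u} [Field F] : Option F → Option F → Option F
  | some a, some b => some (a * b)
  | _, _ => none

/-- Negation on the common meadow enlargement `Option F` of a field `F`. -/
def cmNeg {F : Type u} [Field F] : Option F → Option F
  | some a => some (-a)
  | none => none

open Classical in
/-- Division on the common meadow enlargement `Option F` of a field `F`:
`x / y = ⊥` if `x = ⊥` or `y = ⊥` or `y = 0`, and `x / y = x * y⁻¹` otherwise. -/
noncomputable def cmDiv {F : Type u} [Field F] : Option F → Option F → Option F
  | some a, some b => if b = 0 then none else some (a * b⁻¹)
  | _, _ => none

/-- Evaluation of a meadow term in the common meadow enlargement `Option F`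
of a field `F`, under a valuation `σ : Fin n → Option F`. -/
noncomputable def eval {n : ℕ} {F : Type u} [Field F] (σ : Fin n → Option F) :
    MTerm n → Option F
  | var i => σ i
  | zero => some 0
  | one => some 1
  | bot => none
  | neg t => cmNeg (t.eval σ)
  | add t s => cmAdd (t.eval σ) (s.eval σ)
  | mul t s => cmMul (t.eval σ) (s.eval σ)
  | div t s => cmDiv (t.eval σ) (s.eval σ)

/-- Derivability in equational logic from the axioms `E_ftc-cm`: the least relation
containing all substitution instances of the axioms that is reflexive, symmetric,
transitive and closed under the term-forming operations. -/
inductive DerivFtc {n : ℕ} : MTerm n → MTerm n → Prop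
  -- E_wcr,⊥
  | add_assoc (x y z : MTerm n) : DerivFtc ((x.add y).add z) (x.add (y.add z))
  | add_comm (x y : MTerm n) : DerivFtc (x.add y) (y.add x)
  | add_zero (x : MTerm n) : DerivFtc (x.add zero) x
  | add_neg (x : MTerm n) : DerivFtc (x.add x.neg) (zero.mul x)
  | mul_assoc (x y z : MTerm n) : DerivFtc (x.mul (y.mul z)) ((x.mul y).mul z)
  | mul_comm (x y : MTerm n) : DerivFtc (x.mul y) (y.mul x)
  | one_mul (x : MTerm n) : DerivFtc (one.mul x) x
  | mul_add (x y z : MTerm n) : DerivFtc (x.mul (y.add z)) ((x.mul y).add (x.mul z))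
  | neg_neg (x : MTerm n) : DerivFtc x.neg.neg x
  | zero_mul_add (x y : MTerm n) : DerivFtc (zero.mul (x.add y)) (zero.mul (x.mul y))
  | add_bot (x : MTerm n) : DerivFtc (x.add bot) bot
  -- the division axioms of E_ftc-cm
  | div_one (x : MTerm n) : DerivFtc x (x.div one)
  | neg_div (x y : MTerm n) : DerivFtc (x.div y).neg (x.neg.div y)
  | div_mul_div (x y u v : MTerm n) :
      DerivFtc ((x.div y).mul (u.div v)) ((x.mul u).div (y.mul v))
  | div_add_div (x y u v : MTerm n) :
      DerivFtc ((x.div y).add (u.div v)) (((x.mul v).add (y.mul u)).div (y.mul v))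
  | div_div (x u v : MTerm n) :
      DerivFtc (x.div (u.div v)) (x.mul ((v.mul v).div (u.mul v)))
  | div_add_zero_mul (x y z : MTerm n) :
      DerivFtc (x.div (y.add (zero.mul z))) ((x.add (zero.mul z)).div y)
  | bot_def : DerivFtc (bot : MTerm n) (one.div zero)
  -- equational logic
  | refl (x : MTerm n) : DerivFtc x x
  | symm {x y : MTerm n} : DerivFtc x y → DerivFtc y x
  | trans {x y z : MTerm n} : DerivFtc x y → DerivFtc y z → DerivFtc x z
  | neg_congr {x y : MTerm n} : DerivFtc x y → DerivFtc x.neg y.neg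
  | add_congr {x x' y y' : MTerm n} :
      DerivFtc x x' → DerivFtc y y' → DerivFtc (x.add y) (x'.add y')
  | mul_congr {x x' y y' : MTerm n} :
      DerivFtc x x' → DerivFtc y y' → DerivFtc (x.mul y) (x'.mul y')
  | div_congr {x x' y y' : MTerm n} :
      DerivFtc x x' → DerivFtc y y' → DerivFtc (x.div y) (x'.div y')


/-- A ring term is a meadow term containing no occurrence of `⊥` and
no occurrence of division. -/
def IsRingTerm {n : ℕ} : MTerm n → Prop
  | var _ => True
  | zero => True
  | one => True
  | bot => False
  | neg t => IsRingTerm t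
  | add t s => IsRingTerm t ∧ IsRingTerm s
  | mul t s => IsRingTerm t ∧ IsRingTerm s
  | div _ _ => False

end MTerm

open MTerm in
/-- Fracterm flattening: every meadow term is provably equal, from `E_ftc-cm`, to a
flat fracterm `p / q` with `p` and `q` ring terms (no `⊥`, no division). -/
theorem fracterm_flattening (n : ℕ) (t : MTerm n) :
    ∃ p q : MTerm n, IsRingTerm p ∧ IsRingTerm q ∧ DerivFtc t (p.div q) := by
  induction t with
  | var i => exact ⟨var i, one, trivial, trivial, DerivFtc.div_one _⟩
  | zero => exact ⟨zero, one, trivial, trivial, DerivFtc.div_one _⟩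
  | one => exact ⟨one, one, trivial, trivial, DerivFtc.div_one _⟩
  | bot => exact ⟨one, zero, trivial, trivial, DerivFtc.bot_def⟩
  | neg t ih =>
      obtain ⟨p, q, hp, hq, h⟩ := ih
      exact ⟨p.neg, q, hp, hq, (DerivFtc.neg_congr h).trans (DerivFtc.neg_div p q)⟩
  | add t s iht ihs =>
      obtain ⟨p, q, hp, hq, h⟩ := iht
      obtain ⟨u, v, hu, hv, h'⟩ := ihs
      exact ⟨(p.mul v).add (q.mul u), q.mul v, ⟨⟨hp, hv⟩, hq, hu⟩, ⟨hq, hv⟩,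
        (DerivFtc.add_congr h h').trans (DerivFtc.div_add_div p q u v)⟩
  | mul t s iht ihs =>
      obtain ⟨p, q, hp, hq, h⟩ := iht
      obtain ⟨u, v, hu, hv, h'⟩ := ihs
      exact ⟨p.mul u, q.mul v, ⟨hp, hu⟩, ⟨hq, hv⟩,
        (DerivFtc.mul_congr h h').trans (DerivFtc.div_mul_div p q u v)⟩
  | div t s iht ihs =>
      obtain ⟨p, q, hp, hq, h⟩ := iht
      obtain ⟨u, v, hu, hv, h'⟩ := ihs
      refine ⟨p.mul (v.mul v), q.mul (u.mul v), ⟨hp, hv, hv⟩, ⟨hq, hu, hv⟩, ?_⟩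
      exact ((DerivFtc.div_congr h h').trans (DerivFtc.div_div _ u v)).trans
        (DerivFtc.div_mul_div p q (v.mul v) (u.mul v))
end

section
/- Let α, β ∈ MvPolynomial (Fin n) ℤ. The following are equivalent: (i) α = β in MvPolynomial (Fin n) ℤ; (ii) the evaluations of the ring terms α* and β* in the ⊥-enlargement of ℚ agree under every valuation σ : Fin n → Option ℚ; (iii) E_wcr,⊥ ⊢ α* = β*. -/
universe u

namespace RTerm

/-- Term powers: `pow t 0 = 1`, `pow t 1 = t`, `pow t (k+1) = pow t k · t`. -/
def pow {n : ℕ} (t : RTerm n) : ℕ → RTerm n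
  | 0 => one
  | 1 => t
  | k + 2 => (t.pow (k + 1)).mul t

/-- Numerals for natural numbers: `0`, `1`, `n+1 = n + 1`. -/
def natNumeral (n : ℕ) : ℕ → RTerm n
  | 0 => zero
  | 1 => one
  | k + 2 => (natNumeral n (k + 1)).add one

/-- Numerals for integers, built from `0`, `1`, `+` and negation. -/
def intNumeral (n : ℕ) (c : ℤ) : RTerm n :=
  if 0 ≤ c then natNumeral n c.toNat else (natNumeral n (-c).toNat).neg

/-- The term `x₁^{d₁} ⋯ xₙ^{dₙ}` representing a monomial `d`. -/
def monTerm {n : ℕ} (d : Fin n →₀ ℕ) : RTerm n :=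
  ((List.finRange n).map fun i => (var i).pow (d i)).foldr mul one

/-- `polyTerm α` is the canonical ring term `α*` representing the integer
multivariate polynomial `α`: the sum, over the monomials in the support of `α`,
of the numeral of the coefficient times the product of the variables raised to
their powers (and `0* = 0`). -/
noncomputable def polyTerm {n : ℕ} (α : MvPolynomial (Fin n) ℤ) : RTerm n :=
  (α.support.toList.map fun d => (intNumeral n (α.coeff d)).mul (monTerm d)).foldr add zero

end RTerm

section Aux

open RTerm

variable {n : ℕ}

lemma bAdd_assoc' (a b c : Option ℚ) : bAdd (bAdd a b) c = bAdd a (bAdd b c) := by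
  rcases a with _|a <;> rcases b with _|b <;> rcases c with _|c <;> simp [bAdd] <;> ring

lemma bAdd_comm' (a b : Option ℚ) : bAdd a b = bAdd b a := by
  rcases a with _|a <;> rcases b with _|b <;> simp [bAdd] <;> ring

lemma bMul_assoc' (a b c : Option ℚ) : bMul a (bMul b c) = bMul (bMul a b) c := by
  rcases a with _|a <;> rcases b with _|b <;> rcases c with _|c <;> simp [bMul] <;> ring

lemma bMul_comm' (a b : Option ℚ) : bMul a b = bMul b a := by
  rcases a with _|a <;> rcases b with _|b <;> simp [bMul] <;> ring

lemma soundness {t s : RTerm n} (h : DerivWcr t s) (σ : Fin n → Option ℚ) :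
    t.evalB σ = s.evalB σ := by
  induction h with
  | add_assoc x y z => simp only [evalB]; exact bAdd_assoc' _ _ _
  | add_comm x y => simp only [evalB]; exact bAdd_comm' _ _
  | add_zero x =>
      simp only [evalB]
      rcases hx : x.evalB σ with _|a <;> simp [bAdd]
  | add_neg x =>
      simp only [evalB]
      rcases hx : x.evalB σ with _|a <;> simp [bAdd, bNeg, bMul]
  | mul_assoc x y z => simp only [evalB]; exact bMul_assoc' _ _ _
  | mul_comm x y => simp only [evalB]; exact bMul_comm' _ _
  | one_mul x =>
      simp only [evalB]
      rcases hx : x.evalB σ with _|a <;> simp [bMul]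
  | mul_add x y z =>
      simp only [evalB]
      rcases hx : x.evalB σ with _|a <;> rcases hy : y.evalB σ with _|b <;>
        rcases hz : z.evalB σ with _|c <;> simp [bMul, bAdd] <;> ring
  | neg_neg x =>
      simp only [evalB]
      rcases hx : x.evalB σ with _|a <;> simp [bNeg]
  | zero_mul_add x y =>
      simp only [evalB]
      rcases hx : x.evalB σ with _|a <;> rcases hy : y.evalB σ with _|b <;>
        simp [bMul, bAdd]
  | add_bot x =>
      simp only [evalB]
      rcases hx : x.evalB σ with _|a <;> simp [bAdd]
  | refl x => rfl
  | symm _ ih => exact ih.symm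
  | trans _ _ ih1 ih2 => exact ih1.trans ih2
  | neg_congr _ ih => simp only [evalB, ih]
  | add_congr _ _ ih1 ih2 => simp only [evalB, ih1, ih2]
  | mul_congr _ _ ih1 ih2 => simp only [evalB, ih1, ih2]

lemma evalB_pow {σ : Fin n → Option ℚ} {t : RTerm n} {a : ℚ}
    (h : t.evalB σ = some a) : ∀ k, (t.pow k).evalB σ = some (a ^ k) := by
  intro k
  induction k with
  | zero => simp [pow, evalB]
  | succ k ih =>
    cases k with
    | zero => simpa [pow] using h
    | succ m => simp [pow, evalB, bMul] at ih ⊢; rw [ih, h]; simp [bMul, pow_succ]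

lemma evalB_natNumeral (σ : Fin n → Option ℚ) (k : ℕ) :
    (natNumeral n k).evalB σ = some (k : ℚ) := by
  induction k with
  | zero => simp [natNumeral, evalB]
  | succ k ih =>
    cases k with
    | zero => simp [natNumeral, evalB]
    | succ m =>
      simp only [natNumeral, evalB, ih]
      simp only [bAdd, Option.some.injEq]
      push_cast
      ring

lemma evalB_intNumeral (σ : Fin n → Option ℚ) (c : ℤ) :
    (intNumeral n c).evalB σ = some (c : ℚ) := by
  unfold intNumeral
  split_ifs with h
  · rw [evalB_natNumeral]
    congr 1
    exact_mod_cast congrArg (Int.cast : ℤ → ℚ) (Int.toNat_of_nonneg h)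
  · simp only [evalB, evalB_natNumeral, bNeg]
    congr 1
    push_neg at h
    have : ((-c).toNat : ℤ) = -c := Int.toNat_of_nonneg (by omega)
    have : ((-c).toNat : ℚ) = (-c : ℤ) := by exact_mod_cast this
    rw [this]; push_cast; ring

lemma evalB_monTerm (σ : Fin n → ℚ) (d : Fin n →₀ ℕ) :
    (monTerm d).evalB (fun i => some (σ i)) = some (∏ i, σ i ^ d i) := by
  rw [Fin.prod_univ_def]
  unfold monTerm
  generalize List.finRange n = l
  induction l with
  | nil => simp [evalB]
  | cons i l ih =>
    simp only [List.map_cons, List.foldr_cons, evalB, ih, List.prod_cons]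
    rw [evalB_pow (σ := fun j => some (σ j)) (t := var i) (a := σ i) rfl]
    simp [bMul]

lemma evalB_polyTerm (σ : Fin n → ℚ) (α : MvPolynomial (Fin n) ℤ) :
    (polyTerm α).evalB (fun i => some (σ i)) =
      some (MvPolynomial.eval σ (MvPolynomial.map (Int.castRingHom ℚ) α)) := by
  rw [← MvPolynomial.eval₂_eq_eval_map, MvPolynomial.eval₂_eq', ← Finset.sum_map_toList]
  unfold polyTerm
  generalize hl : α.support.toList = l
  clear hl
  induction l with
  | nil => simp [evalB]
  | cons d l ih =>
    simp only [List.map_cons, List.foldr_cons, evalB, ih, List.sum_cons,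
      evalB_intNumeral, evalB_monTerm, bMul, bAdd]
    simp

end Aux

open RTerm in
/-- For integer multivariate polynomials `α, β`, the following are equivalent:
(i) `α = β`; (ii) `α*` and `β*` evaluate equally in the `⊥`-enlargement of `ℚ`
under every valuation; (iii) `E_wcr,⊥ ⊢ α* = β*`. -/
theorem polyTerm_eq_iff_eval_rat_iff_derivWcr (n : ℕ) (α β : MvPolynomial (Fin n) ℤ) :
    (α = β ↔
      ∀ σ : Fin n → Option ℚ, (polyTerm α).evalB σ = (polyTerm β).evalB σ) ∧
    ((∀ σ : Fin n → Option ℚ, (polyTerm α).evalB σ = (polyTerm β).evalB σ) ↔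
      DerivWcr (polyTerm α) (polyTerm β)) := by
  have sound : ∀ {t s : RTerm n}, DerivWcr t s →
      ∀ σ : Fin n → Option ℚ, t.evalB σ = s.evalB σ := fun h σ => soundness h σ
  have ev_to_eq : (∀ σ : Fin n → Option ℚ,
      (polyTerm α).evalB σ = (polyTerm β).evalB σ) → α = β := by
    intro H
    have h1 : MvPolynomial.map (Int.castRingHom ℚ) α =
        MvPolynomial.map (Int.castRingHom ℚ) β := by
      apply MvPolynomial.funext
      intro σ
      have := H (fun i => some (σ i))
      rw [evalB_polyTerm, evalB_polyTerm] at this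
      exact Option.some_injective _ this
    exact MvPolynomial.map_injective _ Int.cast_injective h1
  constructor
  · constructor
    · rintro rfl σ; rfl
    · exact ev_to_eq
  · constructor
    · intro H
      have hab := ev_to_eq H
      rw [hab]
      exact DerivWcr.refl _
    · intro h σ
      exact sound h σ
end

section
/- Let R be a commutative ring and let α, β ∈ MvPolynomial (Fin n) ℤ have the same set of variables (MvPolynomial.vars α = MvPolynomial.vars β). Then the evaluations of the ring terms α* and β* in the ⊥-enlargement of R agree under every valuation σ : Fin n → Option R if and only if α and β induce the same polynomial function on R, i.e., for every τ : Fin n → R the evaluations of α and β at τ (mapping coefficients through the canonical ring map ℤ → R) are equal. -/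
universe u

namespace RTerm

/-!
`⊥` is absorbing and the term `α*` has no syntactic cancellation: every variable of `α` occurs
in some summand `c * x^d` with `c ≠ 0`. Hence `α*` evaluates to `⊥` exactly when some variable
of `α` is sent to `⊥`, and otherwise to `α(τ)` for any `τ` extending the defined values. Since
`α` and `β` have the same variables, their `⊥` cases coincide, and the remaining cases are
exactly the polynomial functions.
-/

variable {n : ℕ} {R : Type u} [CommRing R] {σ : Fin n → Option R}

@[simp] lemma bAdd_some_some (a b : R) : bAdd (some a) (some b) = some (a + b) := rfl

@[simp] lemma bMul_some_some (a b : R) : bMul (some a) (some b) = some (a * b) := rfl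

@[simp] lemma bAdd_none_left (x : Option R) : bAdd none x = none := rfl

@[simp] lemma bMul_none_left (x : Option R) : bMul none x = none := rfl

@[simp] lemma bAdd_none_right (x : Option R) : bAdd x none = none := by
  cases x <;> rfl

@[simp] lemma bMul_none_right (x : Option R) : bMul x none = none := by
  cases x <;> rfl

lemma evalB_pow_of_evalB_eq_some {t : RTerm n} {a : R} (h : t.evalB σ = some a) :
    ∀ k, (t.pow k).evalB σ = some (a ^ k)
  | 0 => by simp [pow, evalB]
  | 1 => by simp [pow, h]
  | k + 2 => by simp [pow, evalB, evalB_pow_of_evalB_eq_some h (k + 1), h, pow_succ]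

lemma evalB_pow_of_evalB_eq_none {t : RTerm n} (h : t.evalB σ = none) :
    ∀ {k}, k ≠ 0 → (t.pow k).evalB σ = none
  | 1, _ => by simpa [pow] using h
  | _ + 2, _ => by simp [pow, evalB, h]

lemma evalB_natNumeral : ∀ k : ℕ, (natNumeral n k).evalB σ = some (k : R)
  | 0 => by simp [natNumeral, evalB]
  | 1 => by simp [natNumeral, evalB]
  | k + 2 => by
      simp only [natNumeral, evalB, evalB_natNumeral (k + 1), bAdd_some_some]
      congr 1
      push_cast
      ring

lemma evalB_intNumeral (c : ℤ) : (intNumeral n c).evalB σ = some (c : R) := by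
  rcases le_or_gt 0 c with hc | hc
  · simp only [intNumeral, hc, if_true, evalB_natNumeral]
    rw [← Int.cast_natCast, Int.toNat_of_nonneg hc]
  · simp only [intNumeral, hc.not_ge, if_false, evalB, evalB_natNumeral, bNeg]
    rw [← Int.cast_natCast, Int.toNat_of_nonneg (neg_nonneg.mpr hc.le), Int.cast_neg, neg_neg]

section Fold

variable {ι : Type*} (f : ι → RTerm n)

lemma evalB_foldr_add_of_forall_eq_some (g : ι → R) :
    ∀ l : List ι, (∀ i ∈ l, (f i).evalB σ = some (g i)) →
      ((l.map f).foldr add zero).evalB σ = some (l.map g).sum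
  | [], _ => by simp [evalB]
  | i :: l, h => by
      simp [evalB, h i List.mem_cons_self,
        evalB_foldr_add_of_forall_eq_some g l fun j hj => h j (List.mem_cons_of_mem _ hj)]

lemma evalB_foldr_mul_of_forall_eq_some (g : ι → R) :
    ∀ l : List ι, (∀ i ∈ l, (f i).evalB σ = some (g i)) →
      ((l.map f).foldr mul one).evalB σ = some (l.map g).prod
  | [], _ => by simp [evalB]
  | i :: l, h => by
      simp [evalB, h i List.mem_cons_self,
        evalB_foldr_mul_of_forall_eq_some g l fun j hj => h j (List.mem_cons_of_mem _ hj)]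

lemma evalB_foldr_add_eq_none {l : List ι} {i : ι} (hi : i ∈ l) (h : (f i).evalB σ = none) :
    ((l.map f).foldr add zero).evalB σ = none := by
  induction l with
  | nil => cases hi
  | cons j l ih =>
    rcases List.mem_cons.mp hi with rfl | hi
    · simp [evalB, h]
    · simp [evalB, ih hi]

lemma evalB_foldr_mul_eq_none {l : List ι} {i : ι} (hi : i ∈ l) (h : (f i).evalB σ = none) :
    ((l.map f).foldr mul one).evalB σ = none := by
  induction l with
  | nil => cases hi
  | cons j l ih =>
    rcases List.mem_cons.mp hi with rfl | hi
    · simp [evalB, h]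
    · simp [evalB, ih hi]

end Fold

lemma evalB_monTerm {τ : Fin n → R} (d : Fin n →₀ ℕ) (h : ∀ i, d i ≠ 0 → σ i = some (τ i)) :
    (monTerm d).evalB σ = some (∏ i, τ i ^ d i) := by
  rw [monTerm, evalB_foldr_mul_of_forall_eq_some _ (fun i => τ i ^ d i), Fin.prod_univ_def]
  intro i _
  by_cases hd : d i = 0
  · simp [hd, pow, evalB]
  · exact evalB_pow_of_evalB_eq_some (t := var i) (h i hd) _

lemma evalB_monTerm_eq_none (d : Fin n →₀ ℕ) {i : Fin n} (hd : d i ≠ 0) (hσ : σ i = none) :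
    (monTerm d).evalB σ = none :=
  evalB_foldr_mul_eq_none _ (List.mem_finRange i) (evalB_pow_of_evalB_eq_none (t := var i) hσ hd)

lemma evalB_polyTerm {τ : Fin n → R} (α : MvPolynomial (Fin n) ℤ)
    (h : ∀ i ∈ α.vars, σ i = some (τ i)) :
    (polyTerm α).evalB σ = some (MvPolynomial.eval₂ (Int.castRingHom R) τ α) := by
  rw [polyTerm,
    evalB_foldr_add_of_forall_eq_some _ (fun d => ((α.coeff d : ℤ) : R) * ∏ i, τ i ^ d i),
    MvPolynomial.eval₂_eq', ← Finset.sum_map_toList]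
  · rfl
  intro d hd
  have hmon := evalB_monTerm (τ := τ) d fun i hi => h i <|
    (MvPolynomial.mem_vars_iff_mem_support i).mpr
      ⟨d, Finset.mem_toList.mp hd, Finsupp.mem_support_iff.mpr hi⟩
  simp [evalB, evalB_intNumeral, hmon]

lemma evalB_polyTerm_eq_none (α : MvPolynomial (Fin n) ℤ) {i : Fin n} (hi : i ∈ α.vars)
    (hσ : σ i = none) : (polyTerm α).evalB σ = none := by
  obtain ⟨d, hd, hdi⟩ := (MvPolynomial.mem_vars_iff_mem_support i).mp hi
  refine evalB_foldr_add_eq_none _ (Finset.mem_toList.mpr hd) ?_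
  simp [evalB, evalB_monTerm_eq_none d (Finsupp.mem_support_iff.mp hdi) hσ]

end RTerm

open RTerm in
/-- For a commutative ring `R` and integer polynomials `α, β` with the same set of
variables, `α*` and `β*` evaluate equally in the `⊥`-enlargement of `R` under
every valuation iff `α` and `β` induce the same polynomial function on `R`. -/
theorem polyTerm_eval_bot_iff_eval (n : ℕ) (R : Type u) [CommRing R]
    (α β : MvPolynomial (Fin n) ℤ) (hvars : α.vars = β.vars) :
    (∀ σ : Fin n → Option R, (polyTerm α).evalB σ = (polyTerm β).evalB σ) ↔
      ∀ τ : Fin n → R,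
        MvPolynomial.eval₂ (Int.castRingHom R) τ α =
          MvPolynomial.eval₂ (Int.castRingHom R) τ β := by
  refine ⟨fun h τ => ?_, fun h σ => ?_⟩
  · simpa [evalB_polyTerm (σ := some ∘ τ) (τ := τ) _ fun _ _ => rfl] using h (some ∘ τ)
  by_cases hbot : ∃ i ∈ α.vars, σ i = none
  · obtain ⟨i, hi, hσ⟩ := hbot
    rw [evalB_polyTerm_eq_none α hi hσ, evalB_polyTerm_eq_none β (hvars ▸ hi) hσ]
  · have hdef : ∀ i ∈ α.vars, σ i = some ((σ i).getD 0) := fun i hi => by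
      cases hσ : σ i <;> simp_all
    rw [evalB_polyTerm α hdef, evalB_polyTerm β (hvars ▸ hdef), h]
end

section
/- Let p, q ∈ MvPolynomial (Fin n) ℚ. Suppose that for every a : Fin n → AlgebraicClosure ℚ, p vanishes at a if and only if q vanishes at a. Then p and q have the same irreducible factors up to constant factors: for every irreducible r ∈ MvPolynomial (Fin n) ℚ, r divides p if and only if r divides q. -/
namespace MvPolynomial

variable {k K σ : Type*} [Field k] [Field K] [Algebra k K] [IsAlgClosed K] [Finite σ]

/-- Nullstellensatz for a principal prime ideal. -/
theorem dvd_of_forall_aeval_eq_zero {r q : MvPolynomial σ k} (hr : Prime r)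
    (h : ∀ x : σ → K, aeval x r = 0 → aeval x q = 0) : r ∣ q := by
  have : (Ideal.span {r}).IsPrime := (Ideal.span_singleton_prime hr.ne_zero).2 hr
  rw [← Ideal.mem_span_singleton, ← IsPrime.vanishingIdeal_zeroLocus (K := K) (Ideal.span {r})]
  exact fun x hx => h x (hx r (Ideal.mem_span_singleton_self r))

theorem dvd_of_dvd_of_forall_aeval_eq_zero {r p q : MvPolynomial σ k} (hr : Prime r)
    (hrp : r ∣ p) (h : ∀ x : σ → K, aeval x p = 0 → aeval x q = 0) : r ∣ q := by
  obtain ⟨s, rfl⟩ := hrp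
  exact dvd_of_forall_aeval_eq_zero hr fun x hx => h x (by rw [map_mul, hx, zero_mul])

end MvPolynomial

/-- If two rational multivariate polynomials vanish at exactly the same points of
the algebraic closure of `ℚ`, then they have the same irreducible factors (up to
constant factors): an irreducible polynomial divides one iff it divides the other. -/
theorem same_zeros_same_irreducible_factors (n : ℕ) (p q : MvPolynomial (Fin n) ℚ)
    (h : ∀ a : Fin n → AlgebraicClosure ℚ,
      MvPolynomial.aeval a p = 0 ↔ MvPolynomial.aeval a q = 0) :
    ∀ r : MvPolynomial (Fin n) ℚ, Irreducible r → (r ∣ p ↔ r ∣ q) := by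
  intro r hr
  exact ⟨fun hrp => MvPolynomial.dvd_of_dvd_of_forall_aeval_eq_zero hr.prime hrp fun a => (h a).1,
    fun hrq => MvPolynomial.dvd_of_dvd_of_forall_aeval_eq_zero hr.prime hrq fun a => (h a).2⟩
end

section
/- Let α, β ∈ MvPolynomial (Fin n) ℤ be nonzero primitive polynomials such that for every a : Fin n → AlgebraicClosure ℚ, α vanishes at a if and only if β vanishes at a. Then there exist m : ℕ, primitive irreducible polynomials γ₁, …, γ_m ∈ MvPolynomial (Fin n) ℤ, positive natural numbers a₁, …, a_m and b₁, …, b_m, and signs u, v ∈ {1, −1}, such that α = u · γ₁^{a₁} ⋯ γ_m^{a_m} and β = v · γ₁^{b₁} ⋯ γ_m^{b_m} in MvPolynomial (Fin n) ℤ. -/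
/-- An integer multivariate polynomial is primitive if every integer dividing all
of its coefficients is a unit. -/
def IsPrimitiveInt {n : ℕ} (α : MvPolynomial (Fin n) ℤ) : Prop :=
  ∀ c : ℤ, (∀ d : Fin n →₀ ℕ, c ∣ α.coeff d) → IsUnit c

/-!
If `p` is a primitive prime factor of `α`, then `β` vanishes on the zero set of `p` over `ℚ̄`,
so by the Nullstellensatz `p ∣ β ^ k` over `ℚ̄`. Divisibility descends from `ℚ̄` to `ℚ` along a
`ℚ`-linear retraction `ℚ̄ → ℚ`, and from `ℚ` to `ℤ` by Gauss's lemma, which holds since `p` is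
primitive. Hence `α` and `β` have the same normalized prime factors in the UFD `ℤ[X₁, …, Xₙ]`,
and the units there are the constants `±1`.
-/

open MvPolynomial UniqueFactorizationMonoid

namespace MvPolynomial

variable {σ : Type*}

theorem dvd_of_map_algebraMap_dvd_map {K L : Type*} [Field K] [Field L] [Algebra K L]
    {a b : MvPolynomial σ K}
    (h : map (algebraMap K L) a ∣ map (algebraMap K L) b) : a ∣ b := by
  classical
  obtain ⟨π, hπ⟩ := Module.Projective.exists_dual_eq_one K (one_ne_zero (α := L))
  have hπ_algebraMap (x : K) : π (algebraMap K L x) = x := by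
    rw [Algebra.algebraMap_eq_smul_one, map_smul, hπ, smul_eq_mul, mul_one]
  obtain ⟨q, hq⟩ := h
  -- applying the `K`-linear retraction `π` coefficientwise to the cofactor `q` gives one over `K`
  refine ⟨AddMonoidAlgebra.ofCoeff ((AddMonoidAlgebra.coeff q).mapRange π (map_zero π)),
    MvPolynomial.ext _ _ fun d => ?_⟩
  rw [← hπ_algebraMap (b.coeff d), ← coeff_map, hq, coeff_mul, map_sum, coeff_mul]
  refine Finset.sum_congr rfl fun x _ => ?_
  rw [coeff_map, ← Algebra.smul_def, map_smul, smul_eq_mul]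
  rfl

theorem dvd_of_map_dvd_map_of_prime {R K : Type*} [CommRing R] [IsDomain R] [Field K]
    [Algebra R K] [IsFractionRing R K] {p g : MvPolynomial σ R} (hp : Prime p)
    (hp_content : ∀ c, C c ∣ p → IsUnit c)
    (h : map (algebraMap R K) p ∣ map (algebraMap R K) g) : p ∣ g := by
  let _ := algebraMvPolynomial (σ := σ) (R := R) (S := K)
  obtain ⟨q, hq⟩ := h
  -- clear denominators: `q = q' / N`, so `p ∣ g * C N`, and `p` divides no nonzero constant
  obtain ⟨⟨q', ⟨_, N, hN, rfl⟩⟩, hs⟩ :=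
    IsLocalization.surj ((nonZeroDivisors R).map (C (σ := σ))) q
  have hclear : p * q' = g * C N := by
    apply map_injective _ (IsFractionRing.injective R K)
    simp only [algebraMap_def] at hs
    rw [map_mul, map_mul, ← hs, hq, map_C]
    ring
  refine (hp.dvd_or_dvd ⟨q', hclear.symm⟩).resolve_right fun hpN => ?_
  obtain ⟨c, -, rfl⟩ := (dvd_C_iff_exists (nonZeroDivisors.ne_zero hN)).mp hpN
  exact hp.not_isUnit ((hp_content c dvd_rfl).map C)

theorem exists_dvd_pow_of_zeros_subset {L : Type*} [Field L] [IsAlgClosed L] [Finite σ]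
    {f g : MvPolynomial σ L} (h : ∀ x, eval x f = 0 → eval x g = 0) : ∃ k, f ∣ g ^ k := by
  have hg : g ∈ vanishingIdeal L (zeroLocus L (Ideal.span {f})) := by
    rw [mem_vanishingIdeal_iff]
    intro x hx
    exact h x (hx f (Ideal.subset_span rfl))
  rw [vanishingIdeal_zeroLocus_eq_radical] at hg
  obtain ⟨k, hk⟩ := hg
  exact ⟨k, Ideal.mem_span_singleton.mp hk⟩

theorem exists_unit_eq_C {R : Type*} [CommRing R] [IsReduced R] (w : (MvPolynomial σ R)ˣ) :
    ∃ u : Rˣ, (w : MvPolynomial σ R) = C (u : R) := by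
  obtain ⟨r, hr, hw⟩ := isUnit_iff_eq_C_of_isReduced.mp w.isUnit
  exact ⟨hr.unit, hw⟩

theorem dvd_of_prime_dvd_of_zeros_subset (K : Type*) {R L : Type*} [CommRing R] [IsDomain R]
    [Field K] [Algebra R K] [IsFractionRing R K] [Field L] [IsAlgClosed L] [Algebra R L]
    [Algebra K L] [IsScalarTower R K L] [Finite σ] {p f g : MvPolynomial σ R} (hp : Prime p)
    (hp_content : ∀ c, C c ∣ p → IsUnit c) (hpf : p ∣ f)
    (hfg : ∀ x : σ → L, aeval x f = 0 → aeval x g = 0) : p ∣ g := by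
  obtain ⟨k, hk⟩ := exists_dvd_pow_of_zeros_subset
    (f := map (algebraMap R L) p) (g := map (algebraMap R L) g) fun x hx => by
      obtain ⟨q, rfl⟩ := hpf
      rw [eval_map, ← aeval_def] at hx ⊢
      exact hfg x (by rw [map_mul, hx, zero_mul])
  rw [← map_pow, IsScalarTower.algebraMap_eq R K L, ← map_map, ← map_map] at hk
  exact hp.dvd_of_dvd_pow
    (dvd_of_map_dvd_map_of_prime hp hp_content (dvd_of_map_algebraMap_dvd_map hk))

end MvPolynomial

theorem UniqueFactorizationMonoid.exists_eq_unit_mul_prod_pow_count {α : Type*}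
    [CommMonoidWithZero α] [NormalizationMonoid α] [UniqueFactorizationMonoid α]
    [DecidableEq α] {x : α} (hx : x ≠ 0) {s : Finset α} (hs : (normalizedFactors x).toFinset = s)
    {m : ℕ} (e : Fin m ≃ s) :
    ∃ u : αˣ, x = u * ∏ i, (e i : α) ^ (normalizedFactors x).count (e i : α) := by
  obtain ⟨u, hu⟩ := prod_normalizedFactors hx
  refine ⟨u, ?_⟩
  rw [e.prod_comp fun p : s => (p : α) ^ (normalizedFactors x).count (p : α),
    Finset.prod_coe_sort s fun p => p ^ (normalizedFactors x).count p, ← hs,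
    ← Finset.prod_multiset_count, mul_comm]
  exact hu.symm

theorem isPrimitiveInt_iff_forall_C_dvd {n : ℕ} {p : MvPolynomial (Fin n) ℤ} :
    IsPrimitiveInt p ↔ ∀ c, C c ∣ p → IsUnit c := by
  simp only [IsPrimitiveInt, C_dvd_iff_dvd_coeff]

theorem IsPrimitiveInt.of_dvd {n : ℕ} {p q : MvPolynomial (Fin n) ℤ} (hq : IsPrimitiveInt q)
    (hpq : p ∣ q) : IsPrimitiveInt p :=
  isPrimitiveInt_iff_forall_C_dvd.mpr fun c hc =>
    isPrimitiveInt_iff_forall_C_dvd.mp hq c (hc.trans hpq)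

theorem IsPrimitiveInt.mem_normalizedFactors_of_zeros_subset {n : ℕ}
    [NormalizationMonoid (MvPolynomial (Fin n) ℤ)] {α β : MvPolynomial (Fin n) ℤ}
    (hα : IsPrimitiveInt α) (hβ0 : β ≠ 0)
    (hαβ : ∀ a : Fin n → AlgebraicClosure ℚ,
      eval₂ (Int.castRingHom (AlgebraicClosure ℚ)) a α = 0 →
        eval₂ (Int.castRingHom (AlgebraicClosure ℚ)) a β = 0)
    {p : MvPolynomial (Fin n) ℤ} (hp : p ∈ normalizedFactors α) : p ∈ normalizedFactors β := by
  have hpα := dvd_of_mem_normalizedFactors hp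
  rw [mem_normalizedFactors_iff' hβ0]
  refine ⟨irreducible_of_normalized_factor p hp, normalize_normalized_factor p hp,
    dvd_of_prime_dvd_of_zeros_subset ℚ (L := AlgebraicClosure ℚ)
      (prime_of_normalized_factor p hp) (isPrimitiveInt_iff_forall_C_dvd.mp (hα.of_dvd hpα))
      hpα ?_⟩
  simpa only [aeval_def, Subsingleton.elim (algebraMap ℤ (AlgebraicClosure ℚ)) (Int.castRingHom _)]
    using hαβ

/-- Nonzero primitive integer polynomials vanishing at exactly the same points of
the algebraic closure of `ℚ` have, up to sign, a common system of primitive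
irreducible factors, with positive exponents. -/
theorem primitive_same_zeros_common_factorisation (n : ℕ)
    (α β : MvPolynomial (Fin n) ℤ) (hα0 : α ≠ 0) (hβ0 : β ≠ 0)
    (hαprim : IsPrimitiveInt α) (hβprim : IsPrimitiveInt β)
    (h : ∀ a : Fin n → AlgebraicClosure ℚ,
      MvPolynomial.eval₂ (Int.castRingHom (AlgebraicClosure ℚ)) a α = 0 ↔
        MvPolynomial.eval₂ (Int.castRingHom (AlgebraicClosure ℚ)) a β = 0) :
    ∃ (m : ℕ) (γ : Fin m → MvPolynomial (Fin n) ℤ) (a b : Fin m → ℕ) (u v : ℤˣ),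
      (∀ i, IsPrimitiveInt (γ i)) ∧ (∀ i, Irreducible (γ i)) ∧
      (∀ i, 0 < a i) ∧ (∀ i, 0 < b i) ∧
      α = MvPolynomial.C (u : ℤ) * ∏ i, γ i ^ a i ∧
      β = MvPolynomial.C (v : ℤ) * ∏ i, γ i ^ b i := by
  classical
  let _ := UniqueFactorizationMonoid.strongNormalizationMonoid (α := MvPolynomial (Fin n) ℤ)
  set s := (normalizedFactors α).toFinset with hsα
  have hsβ : (normalizedFactors β).toFinset = s := by
    ext p
    simp only [hsα, Multiset.mem_toFinset]
    exact ⟨hβprim.mem_normalizedFactors_of_zeros_subset hα0 fun a => (h a).mpr,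
      hαprim.mem_normalizedFactors_of_zeros_subset hβ0 fun a => (h a).mp⟩
  set γ := s.equivFin.symm
  have hγα (i) : (γ i : MvPolynomial (Fin n) ℤ) ∈ normalizedFactors α :=
    Multiset.mem_toFinset.mp (γ i).2
  have hγβ (i) : (γ i : MvPolynomial (Fin n) ℤ) ∈ normalizedFactors β :=
    Multiset.mem_toFinset.mp (hsβ.symm ▸ (γ i).2)
  obtain ⟨wα, hα⟩ := exists_eq_unit_mul_prod_pow_count hα0 hsα.symm γ
  obtain ⟨wβ, hβ⟩ := exists_eq_unit_mul_prod_pow_count hβ0 hsβ γ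
  obtain ⟨u, hu⟩ := exists_unit_eq_C wα
  obtain ⟨v, hv⟩ := exists_unit_eq_C wβ
  exact ⟨s.card, fun i => γ i, fun i => (normalizedFactors α).count (γ i).1,
    fun i => (normalizedFactors β).count (γ i).1, u, v,
    fun i => hαprim.of_dvd (dvd_of_mem_normalizedFactors (hγα i)),
    fun i => irreducible_of_normalized_factor _ (hγα i),
    fun i => Multiset.count_pos.mpr (hγα i), fun i => Multiset.count_pos.mpr (hγβ i),
    hu ▸ hα, hv ▸ hβ⟩
end

section
/- Let t be a ring term in n variables whose set of occurring variables is nonempty. Then there exists a ring term q which is a product of distinct variables, each occurring exactly once (to the first power), such that E_wcr,⊥ ⊢ 0·t = 0·q. -/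
universe u

namespace RTerm

/-- The set of variables occurring in a term. -/
def varSet {n : ℕ} : RTerm n → Finset (Fin n)
  | var i => {i}
  | zero => ∅
  | one => ∅
  | bot => ∅
  | neg t => varSet t
  | add t s => varSet t ∪ varSet s
  | mul t s => varSet t ∪ varSet s

/-- Product of a list of terms (empty product `1`, singleton product the term
itself). -/
def prodList {n : ℕ} : List (RTerm n) → RTerm n
  | [] => one
  | [t] => t
  | t :: ts => t.mul (prodList ts)

end RTerm

namespace RTermAux

open RTerm

variable {n : ℕ}

instance : Trans (DerivWcr (n := n)) (DerivWcr (n := n)) (DerivWcr (n := n)) :=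
  ⟨DerivWcr.trans⟩

/-- `0 · x`. -/
abbrev Z (x : RTerm n) : RTerm n := RTerm.zero.mul x

lemma z_congr {x y : RTerm n} (h : DerivWcr x y) : DerivWcr (Z x) (Z y) :=
  DerivWcr.mul_congr (DerivWcr.refl _) h

/-- Replace the left factor under `0·`. -/
lemma z_left {x y : RTerm n} (s : RTerm n) (h : DerivWcr (Z x) (Z y)) :
    DerivWcr (Z (x.mul s)) (Z (y.mul s)) :=
  ((DerivWcr.mul_assoc RTerm.zero x s).trans
    (DerivWcr.mul_congr h (DerivWcr.refl s))).trans
    (DerivWcr.mul_assoc RTerm.zero y s).symm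

lemma mul_one' (x : RTerm n) : DerivWcr (x.mul RTerm.one) x :=
  (DerivWcr.mul_comm x RTerm.one).trans (DerivWcr.one_mul x)

lemma z_add_one (x : RTerm n) : DerivWcr (Z x) (Z (x.add RTerm.one)) :=
  (z_congr (mul_one' x).symm).trans (DerivWcr.zero_mul_add x RTerm.one).symm

lemma z_zero_one : DerivWcr (Z (RTerm.zero : RTerm n)) (Z RTerm.one) :=
  ((z_add_one RTerm.zero).trans
    (z_congr (DerivWcr.add_comm RTerm.zero RTerm.one))).trans
    (z_congr (DerivWcr.add_zero RTerm.one))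

lemma z_neg (x : RTerm n) : DerivWcr (Z x.neg) (Z x) :=
  (((DerivWcr.add_neg x.neg).symm.trans
    (DerivWcr.add_congr (DerivWcr.refl x.neg) (DerivWcr.neg_neg x))).trans
    (DerivWcr.add_comm x.neg x)).trans (DerivWcr.add_neg x)

lemma z_idem (x : RTerm n) : DerivWcr (Z (x.mul x)) (Z x) := by
  have h1 : DerivWcr (x.add x) (x.mul (RTerm.one.add RTerm.one)) :=
    ((DerivWcr.mul_add x RTerm.one RTerm.one).trans
      (DerivWcr.add_congr (mul_one' x) (mul_one' x))).symm
  exact ((((((((DerivWcr.zero_mul_add x x).symm.trans (z_congr h1)).trans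
    (DerivWcr.zero_mul_add x (RTerm.one.add RTerm.one)).symm).trans
    (z_congr (DerivWcr.add_assoc x RTerm.one RTerm.one).symm)).trans
    (DerivWcr.zero_mul_add (x.add RTerm.one) RTerm.one)).trans
    (z_congr (mul_one' (x.add RTerm.one))))).trans (z_add_one x).symm)

lemma prod_cons (t : RTerm n) (l : List (RTerm n)) :
    DerivWcr (prodList (t :: l)) (t.mul (prodList l)) := by
  match l with
  | [] => exact (mul_one' t).symm
  | s :: l' => exact DerivWcr.refl _

lemma prod_perm : ∀ {l1 l2 : List (RTerm n)}, l1.Perm l2 →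
    DerivWcr (prodList l1) (prodList l2) := by
  intro l1 l2 h
  induction h with
  | nil => exact DerivWcr.refl _
  | cons x _ ih =>
      exact ((prod_cons x _).trans
        (DerivWcr.mul_congr (DerivWcr.refl x) ih)).trans (prod_cons x _).symm
  | swap x y l =>
      exact ((((((prod_cons y _).trans
        (DerivWcr.mul_congr (DerivWcr.refl y) (prod_cons x l))).trans
        (DerivWcr.mul_assoc y x (prodList l))).trans
        (DerivWcr.mul_congr (DerivWcr.mul_comm y x) (DerivWcr.refl _))).trans
        (DerivWcr.mul_assoc x y (prodList l)).symm).trans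
        (DerivWcr.mul_congr (DerivWcr.refl x) (prod_cons y l).symm)).trans
        (prod_cons x _).symm
  | trans _ _ ih1 ih2 => exact ih1.trans ih2

lemma prod_append : ∀ (l1 l2 : List (RTerm n)),
    DerivWcr (prodList (l1 ++ l2)) ((prodList l1).mul (prodList l2)) := by
  intro l1 l2
  induction l1 with
  | nil => exact (DerivWcr.one_mul _).symm
  | cons t l1 ih =>
      exact (((prod_cons t _).trans
        (DerivWcr.mul_congr (DerivWcr.refl t) ih)).trans
        (DerivWcr.mul_assoc t _ _)).trans
        (DerivWcr.mul_congr (prod_cons t l1).symm (DerivWcr.refl _))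

/-- Product of variables of a list of indices. -/
abbrev P (l : List (Fin n)) : RTerm n := prodList (l.map RTerm.var)

lemma z_dedup (l : List (Fin n)) : DerivWcr (Z (P l)) (Z (P l.dedup)) := by
  induction l with
  | nil => exact DerivWcr.refl _
  | cons a l ih =>
      by_cases h : a ∈ l
      · rw [List.dedup_cons_of_mem h]
        have hperm : l.Perm (a :: l.erase a) := List.perm_cons_erase h
        have h1 : DerivWcr (prodList (l.map RTerm.var))
            ((RTerm.var a).mul (P (l.erase a))) :=
          (prod_perm (hperm.map RTerm.var)).trans (prod_cons _ _)
        refine DerivWcr.trans ?_ ih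
        exact ((((z_congr ((prod_cons _ _).trans
          (DerivWcr.mul_congr (DerivWcr.refl _) h1))).trans
          (z_congr (DerivWcr.mul_assoc _ _ _))).trans
          (z_left _ (z_idem (RTerm.var a)))).trans
          (z_congr (prod_cons (RTerm.var a) ((l.erase a).map RTerm.var)).symm)).trans
          (z_congr (prod_perm (hperm.map RTerm.var)).symm)
      · rw [List.dedup_cons_of_notMem h]
        exact ((((z_congr (prod_cons _ _)).trans
          (z_congr (DerivWcr.mul_comm _ _))).trans (z_left _ ih)).trans
          (z_congr (DerivWcr.mul_comm _ _))).trans (z_congr (prod_cons _ _).symm)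

/-- A closed `⊥`-free term collapses to `1` under `0·`. -/
lemma z_closed : ∀ (s : RTerm n), BotFree s → varSet s = ∅ →
    DerivWcr (Z s) (Z RTerm.one) := by
  intro s hb hv
  induction s with
  | var i => simp [varSet] at hv
  | zero => exact z_zero_one
  | one => exact DerivWcr.refl _
  | bot => exact absurd hb id
  | neg s ih => exact (z_neg s).trans (ih hb hv)
  | add s1 s2 ih1 ih2 =>
      obtain ⟨hb1, hb2⟩ := hb
      rw [show varSet (s1.add s2) = varSet s1 ∪ varSet s2 from rfl,
        Finset.union_eq_empty] at hv
      exact (((DerivWcr.zero_mul_add s1 s2).trans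
        (z_left s2 (ih1 hb1 hv.1))).trans
        (z_congr (DerivWcr.one_mul s2))).trans (ih2 hb2 hv.2)
  | mul s1 s2 ih1 ih2 =>
      obtain ⟨hb1, hb2⟩ := hb
      rw [show varSet (s1.mul s2) = varSet s1 ∪ varSet s2 from rfl,
        Finset.union_eq_empty] at hv
      exact ((z_left s2 (ih1 hb1 hv.1)).trans
        (z_congr (DerivWcr.one_mul s2))).trans (ih2 hb2 hv.2)

lemma combine (t s : RTerm n) (hbt : BotFree t) (hbs : BotFree s)
    (hvu : (varSet t ∪ varSet s).Nonempty)
    (iht : (varSet t).Nonempty → ∃ l : List (Fin n), l ≠ [] ∧ DerivWcr (Z t) (Z (P l)))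
    (ihs : (varSet s).Nonempty → ∃ l : List (Fin n), l ≠ [] ∧ DerivWcr (Z s) (Z (P l))) :
    ∃ l : List (Fin n), l ≠ [] ∧ DerivWcr (Z (t.mul s)) (Z (P l)) := by
  rcases (varSet t).eq_empty_or_nonempty with hte | hte <;>
    rcases (varSet s).eq_empty_or_nonempty with hse | hse
  · rw [hte, hse] at hvu; simp at hvu
  · obtain ⟨l2, hl2ne, hl2⟩ := ihs hse
    refine ⟨l2, hl2ne, ?_⟩
    exact ((z_left s (z_closed t hbt hte)).trans
      (z_congr (DerivWcr.one_mul s))).trans hl2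
  · obtain ⟨l1, hl1ne, hl1⟩ := iht hte
    refine ⟨l1, hl1ne, ?_⟩
    exact (((z_congr (DerivWcr.mul_comm t s)).trans
      (z_left t (z_closed s hbs hse))).trans
      (z_congr (DerivWcr.one_mul t))).trans hl1
  · obtain ⟨l1, hl1ne, hl1⟩ := iht hte
    obtain ⟨l2, hl2ne, hl2⟩ := ihs hse
    refine ⟨l1 ++ l2, by simp [hl1ne], ?_⟩
    have hpa : DerivWcr (P (l1 ++ l2)) ((P l1).mul (P l2)) := by
      have h := prod_append (l1.map RTerm.var) (l2.map RTerm.var)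
      rwa [← List.map_append] at h
    exact (((((z_left s hl1).trans (z_congr (DerivWcr.mul_comm _ s))).trans
      (z_left _ hl2)).trans (z_congr (DerivWcr.mul_comm _ _))).trans
      (z_congr hpa.symm))

lemma main : ∀ (t : RTerm n), BotFree t → (varSet t).Nonempty →
    ∃ l : List (Fin n), l ≠ [] ∧ DerivWcr (Z t) (Z (P l)) := by
  intro t hb hv
  induction t with
  | var i => exact ⟨[i], by simp, DerivWcr.refl _⟩
  | zero => simp [varSet] at hv
  | one => simp [varSet] at hv
  | bot => exact absurd hb id
  | neg t ih =>
      obtain ⟨l, hne, hd⟩ := ih hb hv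
      exact ⟨l, hne, (z_neg t).trans hd⟩
  | add t s iht ihs =>
      obtain ⟨hb1, hb2⟩ := hb
      obtain ⟨l, hne, hd⟩ := combine t s hb1 hb2 hv (iht hb1) (ihs hb2)
      exact ⟨l, hne, (DerivWcr.zero_mul_add t s).trans hd⟩
  | mul t s iht ihs =>
      obtain ⟨hb1, hb2⟩ := hb
      exact combine t s hb1 hb2 hv (iht hb1) (ihs hb2)

end RTermAux

open RTerm in
/-- For a ring term `t` with at least one occurring variable, `0·t` is provably
equal, from `E_wcr,⊥`, to `0·q` where `q` is a product of distinct variables,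
each occurring exactly once (to the first power). -/
theorem zero_mul_eq_zero_mul_linear_monomial (n : ℕ) (t : RTerm n)
    (ht : BotFree t) (hvars : (varSet t).Nonempty) :
    ∃ l : List (Fin n), l ≠ [] ∧ l.Nodup ∧
      DerivWcr (RTerm.zero.mul t) (RTerm.zero.mul (prodList (l.map RTerm.var))) := by
  obtain ⟨l, hne, hd⟩ := RTermAux.main t ht hvars
  exact ⟨l.dedup, by simpa using hne, l.nodup_dedup,
    hd.trans (RTermAux.z_dedup l)⟩
end

section
/- Let α, β ∈ MvPolynomial (Fin n) ℤ be nonzero. Then E_wcr,⊥ ⊢ α* · β* = (α·β)*; in particular, the product of two nonzero polynomial sumterms is provably equal, from E_wcr,⊥, to a polynomial sumterm. -/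
/-!
In a model of the `⊥`-free part of `E_wcr,⊥`, `0 * x` need not vanish: for a polynomial
sumterm it is `∑ 0 * xᵢ` over its variables, an idempotent that is absorbed by any polynomial
sumterm mentioning all those variables. Multiplying out `α* · β*` with distributivity gives the
sum of all products of monomials plus such a term over `vars α ∪ vars β`; collecting like
monomials (their integer coefficients live in the ring of elements with `0 * x = 0`) turns the
sum into `(α·β)*` up to more terms of the same kind. Since `ℤ` has no zero divisors,
`vars α ∪ vars β ⊆ vars (α·β)` for nonzero `α`, `β`, so all of it is absorbed by
`(α·β)*`.
The computation takes place in the quotient of terms by derivability.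
-/

universe u

-- The `⊥`-free equations of `E_wcr,⊥`, as axioms.
class WeakCommRing (R : Type*) extends AddCommMonoid R, CommMonoid R, Distrib R, Neg R where
  protected neg_neg (x : R) : - -x = x
  protected add_neg (x : R) : x + -x = 0 * x
  protected zero_mul_add (x y : R) : 0 * (x + y) = 0 * (x * y)

namespace WeakCommRing

variable {R : Type*} [WeakCommRing R]

theorem add_zero_mul_self (x : R) : x + 0 * x = x :=
  calc x + 0 * x = x * (1 + 0) := by rw [mul_add, mul_one, mul_comm]
    _ = x := by rw [add_zero, mul_one]

theorem zero_mul_zero : (0 : R) * 0 = 0 := by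
  simpa only [zero_add] using add_zero_mul_self (0 : R)

theorem zero_mul_mul (x y : R) : 0 * (x * y) = 0 * x + 0 * y := by
  rw [← WeakCommRing.zero_mul_add, mul_add]

theorem zero_mul_add_zero_mul_self (x : R) : 0 * x + 0 * x = 0 * x := by
  simpa only [zero_mul_mul, zero_mul_zero, zero_add] using add_zero_mul_self (0 * x)

theorem zero_mul_neg (x : R) : 0 * -x = 0 * x := by
  rw [← WeakCommRing.add_neg, WeakCommRing.neg_neg, add_comm, WeakCommRing.add_neg]

theorem zero_mul_pow (x : R) {k : ℕ} (hk : k ≠ 0) : 0 * x ^ k = 0 * x := by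
  induction k with
  | zero => contradiction
  | succ k ih =>
    rcases eq_or_ne k 0 with rfl | hk
    · rw [zero_add, pow_one]
    · rw [pow_succ, zero_mul_mul, ih hk, zero_mul_add_zero_mul_self]

def zeroMulHom : R →+ R where
  toFun x := 0 * x
  map_zero' := zero_mul_zero
  map_add' := mul_add 0

theorem zero_mul_sum {ι : Type*} (s : Finset ι) (f : ι → R) :
    0 * ∑ i ∈ s, f i = ∑ i ∈ s, 0 * f i :=
  map_sum zeroMulHom f s

theorem zero_mul_prod {ι : Type*} (s : Finset ι) (f : ι → R) :
    0 * ∏ i ∈ s, f i = ∑ i ∈ s, 0 * f i := by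
  classical
  induction s using Finset.induction_on with
  | empty => simp
  | insert a s ha ih => rw [Finset.prod_insert ha, Finset.sum_insert ha, zero_mul_mul, ih]

protected theorem sum_mul {ι : Type*} (s : Finset ι) (f : ι → R) (y : R) :
    (∑ i ∈ s, f i) * y = ∑ i ∈ s, f i * y + 0 * y := by
  classical
  induction s using Finset.induction_on with
  | empty => simp
  | insert a s ha ih => rw [Finset.sum_insert ha, Finset.sum_insert ha, add_mul, ih, add_assoc]

protected theorem sum_mul_sum {ι κ : Type*} (s : Finset ι) (t : Finset κ) (f : ι → R)
    (g : κ → R) :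
    (∑ i ∈ s, f i) * ∑ j ∈ t, g j =
      ∑ i ∈ s, ∑ j ∈ t, f i * g j + 0 * ∑ i ∈ s, f i + 0 * ∑ j ∈ t, g j := by
  have h (i : ι) : f i * ∑ j ∈ t, g j = ∑ j ∈ t, f i * g j + 0 * f i := by
    simp_rw [mul_comm (f i), WeakCommRing.sum_mul]
  simp_rw [WeakCommRing.sum_mul s, h, Finset.sum_add_distrib, zero_mul_sum]

-- On these elements `x + -x = 0 * x = 0`, so they form a commutative ring.
abbrev Total (R : Type*) [WeakCommRing R] := {x : R // 0 * x = 0}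

instance : Zero (Total R) := ⟨⟨0, zero_mul_zero⟩⟩
instance : One (Total R) := ⟨⟨1, mul_one 0⟩⟩
instance : Add (Total R) := ⟨fun x y => ⟨x + y, by rw [mul_add, x.2, y.2, add_zero]⟩⟩
instance : Mul (Total R) := ⟨fun x y => ⟨x * y, by rw [zero_mul_mul, x.2, y.2, add_zero]⟩⟩
instance : Neg (Total R) := ⟨fun x => ⟨-x, by rw [zero_mul_neg, x.2]⟩⟩

instance : CommRing (Total R) where
  add_assoc x y z := Subtype.ext (add_assoc (x : R) y z)
  zero_add x := Subtype.ext (zero_add (x : R))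
  add_zero x := Subtype.ext (add_zero (x : R))
  add_comm x y := Subtype.ext (add_comm (x : R) y)
  mul_assoc x y z := Subtype.ext (mul_assoc (x : R) y z)
  one_mul x := Subtype.ext (one_mul (x : R))
  mul_one x := Subtype.ext (mul_one (x : R))
  mul_comm x y := Subtype.ext (mul_comm (x : R) y)
  zero_mul x := Subtype.ext x.2
  mul_zero x := Subtype.ext ((mul_comm _ _).trans x.2)
  left_distrib x y z := Subtype.ext (mul_add (x : R) y z)
  right_distrib x y z := Subtype.ext (add_mul (x : R) y z)
  neg_add_cancel x := Subtype.ext ((add_comm _ _).trans ((WeakCommRing.add_neg _).trans x.2))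
  nsmul := nsmulRec
  zsmul := zsmulRec

def numeral (c : ℤ) : R := ((c : Total R) : R)

theorem numeral_add (a b : ℤ) : (numeral (a + b) : R) = numeral a + numeral b :=
  congrArg Subtype.val (Int.cast_add a b)

theorem numeral_mul (a b : ℤ) : (numeral (a * b) : R) = numeral a * numeral b :=
  congrArg Subtype.val (Int.cast_mul a b)

theorem numeral_zero : (numeral 0 : R) = 0 :=
  congrArg Subtype.val Int.cast_zero

theorem numeral_natCast (k : ℕ) : (numeral k : R) = ((k : Total R) : R) :=
  congrArg Subtype.val (Int.cast_natCast k)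

theorem numeral_neg (c : ℤ) : (numeral (-c) : R) = -numeral c :=
  congrArg Subtype.val (Int.cast_neg c)

theorem zero_mul_numeral (c : ℤ) : 0 * (numeral c : R) = 0 :=
  (c : Total R).2

section Polynomial

open MvPolynomial

variable {σ : Type*} (X : σ → R)

def evalMonomial (d : σ →₀ ℕ) : R := d.prod fun i k => X i ^ k

def zeroMulVars (V : Finset σ) : R := ∑ i ∈ V, 0 * X i

theorem evalMonomial_add (d e : σ →₀ ℕ) :
    evalMonomial X (d + e) = evalMonomial X d * evalMonomial X e :=
  Finsupp.prod_add_index' (fun _ => pow_zero _) fun _ => pow_add _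

theorem zero_mul_evalMonomial (d : σ →₀ ℕ) :
    0 * evalMonomial X d = zeroMulVars X d.support := by
  rw [evalMonomial, Finsupp.prod, zero_mul_prod]
  exact Finset.sum_congr rfl fun i hi => zero_mul_pow _ (Finsupp.mem_support_iff.1 hi)

variable [DecidableEq σ]

def evalSumTerm (p : MvPolynomial σ ℤ) : R :=
  ∑ d ∈ p.support, numeral (p.coeff d) * evalMonomial X d

theorem zeroMulVars_add_of_subset {V W : Finset σ} (h : V ⊆ W) :
    zeroMulVars X W + zeroMulVars X V = zeroMulVars X W := by
  rw [zeroMulVars, ← Finset.sum_sdiff h, add_assoc, zeroMulVars, ← Finset.sum_add_distrib]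
  simp_rw [zero_mul_add_zero_mul_self]

theorem zeroMulVars_union (V W : Finset σ) :
    zeroMulVars X (V ∪ W) = zeroMulVars X V + zeroMulVars X W := by
  rw [zeroMulVars, zeroMulVars, zeroMulVars, ← Finset.sum_union_inter]
  exact (zeroMulVars_add_of_subset X Finset.inter_subset_union).symm

theorem zeroMulVars_biUnion {ι : Type*} (s : Finset ι) (V : ι → Finset σ) :
    zeroMulVars X (s.biUnion V) = ∑ i ∈ s, zeroMulVars X (V i) := by
  classical
  induction s using Finset.induction_on with
  | empty => rfl
  | insert a s ha ih => rw [Finset.biUnion_insert, zeroMulVars_union, ih, Finset.sum_insert ha]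

theorem sum_zeroMulVars_add_of_subset {ι : Type*} {s : Finset ι} {V : ι → Finset σ}
    {W : Finset σ} (h : ∀ i ∈ s, V i ⊆ W) :
    ∑ i ∈ s, zeroMulVars X (V i) + zeroMulVars X W = zeroMulVars X W := by
  classical
  rw [← zeroMulVars_biUnion, add_comm, zeroMulVars_add_of_subset X (Finset.biUnion_subset.2 h)]

theorem zero_mul_evalSumTerm (p : MvPolynomial σ ℤ) :
    0 * evalSumTerm X p = zeroMulVars X p.vars := by
  simp_rw [evalSumTerm, zero_mul_sum, zero_mul_mul, zero_mul_numeral, zero_add,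
    zero_mul_evalMonomial, vars_eq_support_biUnion_support, zeroMulVars_biUnion]

theorem evalSumTerm_add_zeroMulVars {p : MvPolynomial σ ℤ} {V : Finset σ} (h : V ⊆ p.vars) :
    evalSumTerm X p + zeroMulVars X V = evalSumTerm X p := by
  conv_lhs => rw [← add_zero_mul_self (evalSumTerm X p), zero_mul_evalSumTerm, add_assoc,
    zeroMulVars_add_of_subset X h]
  rw [← zero_mul_evalSumTerm, add_zero_mul_self]

theorem evalSumTerm_add_zeroMulVars_eq_sum {p : MvPolynomial σ ℤ} {S : Finset (σ →₀ ℕ)}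
    {V : Finset σ} (hS : p.support ⊆ S) (hV : ∀ d ∈ S, p.coeff d = 0 → d.support ⊆ V) :
    evalSumTerm X p + zeroMulVars X V =
      ∑ d ∈ S, numeral (p.coeff d) * evalMonomial X d + zeroMulVars X V := by
  have hzero : ∀ d ∈ S \ p.support,
      numeral (p.coeff d) * evalMonomial X d = zeroMulVars X d.support := by
    intro d hd
    rw [notMem_support_iff.1 (Finset.mem_sdiff.1 hd).2, numeral_zero, zero_mul_evalMonomial]
  rw [← Finset.sum_sdiff hS, Finset.sum_congr rfl hzero, evalSumTerm,
    add_comm (∑ d ∈ _ \ _, _), add_assoc, sum_zeroMulVars_add_of_subset]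
  intro d hd
  exact hV d (Finset.mem_sdiff.1 hd).1 (notMem_support_iff.1 (Finset.mem_sdiff.1 hd).2)

theorem evalSumTerm_add_monomial (p : MvPolynomial σ ℤ) {d : σ →₀ ℕ} (c : ℤ)
    {V : Finset σ} (hd : d.support ⊆ V) :
    evalSumTerm X p + numeral c * evalMonomial X d + zeroMulVars X V =
      evalSumTerm X (p + monomial d c) + zeroMulVars X V := by
  have hcoeff {e : σ →₀ ℕ} (he : e ≠ d) : (p + monomial d c).coeff e = p.coeff e := by
    rw [coeff_add, coeff_monomial, if_neg he.symm, add_zero]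
  have hsupport : (p + monomial d c).support ⊆ insert d p.support := by
    refine support_add.trans (Finset.union_subset (Finset.subset_insert _ _) ?_)
    exact support_monomial_subset.trans
      (Finset.singleton_subset_iff.2 (Finset.mem_insert_self _ _))
  have hV {q : MvPolynomial σ ℤ} (hq : ∀ e ≠ d, q.coeff e = p.coeff e) :
      ∀ e ∈ insert d p.support, q.coeff e = 0 → e.support ⊆ V := by
    intro e he hqe
    rcases eq_or_ne e d with rfl | hne
    · exact hd
    · rw [hq e hne] at hqe
      exact absurd hqe (mem_support_iff.1 ((Finset.mem_insert.1 he).resolve_left hne))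
  have hsum : ∑ e ∈ insert d p.support, numeral (p.coeff e) * evalMonomial X e +
      numeral c * evalMonomial X d =
      ∑ e ∈ insert d p.support, numeral ((p + monomial d c).coeff e) * evalMonomial X e := by
    rw [← Finset.add_sum_erase _ _ (Finset.mem_insert_self d _),
      ← Finset.add_sum_erase _ _ (Finset.mem_insert_self d _), add_right_comm, ← add_mul,
      ← numeral_add, coeff_add, coeff_monomial, if_pos rfl]
    congr 1
    exact Finset.sum_congr rfl fun e he => by rw [hcoeff (Finset.ne_of_mem_erase he)]
  rw [add_right_comm, evalSumTerm_add_zeroMulVars_eq_sum X (Finset.subset_insert d _)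
      (hV fun _ _ => rfl), evalSumTerm_add_zeroMulVars_eq_sum X hsupport (hV fun _ => hcoeff),
    add_right_comm, hsum]

theorem sum_numeral_mul_evalMonomial_add_zeroMulVars {ι : Type*} (s : Finset ι)
    (d : ι → σ →₀ ℕ) (c : ι → ℤ) {V : Finset σ}
    (hV : ∀ i ∈ s, (d i).support ⊆ V) :
    ∑ i ∈ s, numeral (c i) * evalMonomial X (d i) + zeroMulVars X V =
      evalSumTerm X (∑ i ∈ s, monomial (d i) (c i)) + zeroMulVars X V := by
  classical
  induction s using Finset.induction_on with
  | empty => simp [evalSumTerm]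
  | insert a s ha ih =>
    simp only [Finset.mem_insert, forall_eq_or_imp] at hV
    rw [Finset.sum_insert ha, Finset.sum_insert ha, add_comm (monomial _ _),
      ← evalSumTerm_add_monomial X _ _ hV.1, add_right_comm (evalSumTerm X _), ← ih hV.2]
    abel

theorem evalSumTerm_mul (p q : MvPolynomial σ ℤ) :
    evalSumTerm X p * evalSumTerm X q =
      evalSumTerm X (p * q) + zeroMulVars X (p.vars ∪ q.vars) := by
  have hterm (d e : σ →₀ ℕ) :
      numeral (p.coeff d) * evalMonomial X d * (numeral (q.coeff e) * evalMonomial X e) =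
        numeral (p.coeff d * q.coeff e) * evalMonomial X (d + e) := by
    rw [mul_mul_mul_comm, numeral_mul, evalMonomial_add]
  have hprod : ∑ x ∈ p.support ×ˢ q.support,
      monomial (x.1 + x.2) (p.coeff x.1 * q.coeff x.2) = p * q := by
    conv_rhs => rw [p.as_sum, q.as_sum, Finset.sum_mul_sum, ← Finset.sum_product']
    simp_rw [monomial_mul]
  have hV : ∀ x ∈ p.support ×ˢ q.support, (x.1 + x.2).support ⊆ p.vars ∪ q.vars := by
    intro x hx
    rw [Finset.mem_product] at hx
    exact Finsupp.support_add.trans <| Finset.union_subset_union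
      (fun i hi => (mem_vars_iff_mem_support i).2 ⟨x.1, hx.1, hi⟩)
      (fun i hi => (mem_vars_iff_mem_support i).2 ⟨x.2, hx.2, hi⟩)
  rw [evalSumTerm, evalSumTerm, WeakCommRing.sum_mul_sum, ← evalSumTerm, ← evalSumTerm,
    zero_mul_evalSumTerm, zero_mul_evalSumTerm, add_assoc, ← zeroMulVars_union]
  simp_rw [hterm]
  rw [← Finset.sum_product', sum_numeral_mul_evalMonomial_add_zeroMulVars X _ _ _ hV, hprod]

end Polynomial

end WeakCommRing

theorem MvPolynomial.vars_union_subset_vars_mul {R σ : Type*} [CommSemiring R]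
    [NoZeroDivisors R] [DecidableEq σ] {p q : MvPolynomial σ R} (hp : p ≠ 0) (hq : q ≠ 0) :
    p.vars ∪ q.vars ⊆ (p * q).vars := by
  intro i hi
  rw [Finset.mem_union, mem_vars_iff_degreeOf_ne_zero, mem_vars_iff_degreeOf_ne_zero] at hi
  rw [mem_vars_iff_degreeOf_ne_zero, degreeOf_mul_eq hp hq]
  omega

namespace RTerm

open WeakCommRing

variable {n : ℕ}

instance derivWcrSetoid (n : ℕ) : Setoid (RTerm n) :=
  ⟨DerivWcr, ⟨DerivWcr.refl, DerivWcr.symm, DerivWcr.trans⟩⟩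

abbrev Free (n : ℕ) : Type := Quotient (derivWcrSetoid n)

instance : Zero (Free n) := ⟨⟦zero⟧⟩
instance : One (Free n) := ⟨⟦one⟧⟩
instance : Neg (Free n) := ⟨Quotient.map neg fun _ _ => DerivWcr.neg_congr⟩
instance : Add (Free n) := ⟨Quotient.map₂ add fun _ _ h _ _ h' => DerivWcr.add_congr h h'⟩
instance : Mul (Free n) := ⟨Quotient.map₂ mul fun _ _ h _ _ h' => DerivWcr.mul_congr h h'⟩

instance : WeakCommRing (Free n) where
  add_assoc := by rintro ⟨x⟩ ⟨y⟩ ⟨z⟩; exact Quot.sound (.add_assoc x y z)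
  add_comm := by rintro ⟨x⟩ ⟨y⟩; exact Quot.sound (.add_comm x y)
  add_zero := by rintro ⟨x⟩; exact Quot.sound (.add_zero x)
  zero_add := by rintro ⟨x⟩; exact Quot.sound ((DerivWcr.add_comm _ _).trans (.add_zero x))
  mul_assoc := by rintro ⟨x⟩ ⟨y⟩ ⟨z⟩; exact Quot.sound (.symm (.mul_assoc x y z))
  mul_comm := by rintro ⟨x⟩ ⟨y⟩; exact Quot.sound (.mul_comm x y)
  one_mul := by rintro ⟨x⟩; exact Quot.sound (.one_mul x)
  mul_one := by rintro ⟨x⟩; exact Quot.sound ((DerivWcr.mul_comm _ _).trans (.one_mul x))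
  left_distrib := by rintro ⟨x⟩ ⟨y⟩ ⟨z⟩; exact Quot.sound (.mul_add x y z)
  right_distrib := by
    rintro ⟨x⟩ ⟨y⟩ ⟨z⟩
    exact Quot.sound ((DerivWcr.mul_comm _ _).trans ((DerivWcr.mul_add z x y).trans
      (.add_congr (.mul_comm z x) (.mul_comm z y))))
  neg_neg := by rintro ⟨x⟩; exact Quot.sound (.neg_neg x)
  add_neg := by rintro ⟨x⟩; exact Quot.sound (.add_neg x)
  zero_mul_add := by rintro ⟨x⟩ ⟨y⟩; exact Quot.sound (.zero_mul_add x y)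
  nsmul := nsmulRec

theorem mk_pow (t : RTerm n) : ∀ k, (⟦t.pow k⟧ : Free n) = ⟦t⟧ ^ k
  | 0 => (pow_zero _).symm
  | 1 => (pow_one _).symm
  | k + 2 => by rw [pow_succ, ← mk_pow t (k + 1)]; rfl

theorem mk_foldr_mul (l : List (RTerm n)) :
    (⟦l.foldr mul one⟧ : Free n) = (l.map (⟦·⟧)).prod := by
  induction l with
  | nil => rfl
  | cons a l ih => rw [List.map_cons, List.prod_cons, ← ih]; rfl

theorem mk_foldr_add (l : List (RTerm n)) :
    (⟦l.foldr add zero⟧ : Free n) = (l.map (⟦·⟧)).sum := by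
  induction l with
  | nil => rfl
  | cons a l ih => rw [List.map_cons, List.sum_cons, ← ih]; rfl

theorem mk_monTerm (d : Fin n →₀ ℕ) :
    (⟦monTerm d⟧ : Free n) = evalMonomial (fun i => ⟦var i⟧) d := by
  rw [monTerm, mk_foldr_mul, List.map_map, evalMonomial,
    Finsupp.prod_fintype _ _ fun _ => pow_zero _, Fin.prod_univ_def]
  simp only [Function.comp_def, mk_pow]

theorem mk_natNumeral :
    ∀ k : ℕ, (⟦natNumeral n k⟧ : Free n) = ((k : Total (Free n)) : Free n)
  | 0 => (congrArg Subtype.val (Nat.cast_zero (R := Total (Free n)))).symm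
  | 1 => (congrArg Subtype.val (Nat.cast_one (R := Total (Free n)))).symm
  | k + 2 => by
    rw [Nat.cast_succ (R := Total (Free n)) (k + 1)]
    exact congrArg (· + 1) (mk_natNumeral (k + 1))

theorem mk_intNumeral (c : ℤ) : (⟦intNumeral n c⟧ : Free n) = numeral c := by
  rw [intNumeral]
  split_ifs with hc
  · rw [mk_natNumeral, ← numeral_natCast, Int.toNat_of_nonneg hc]
  · change -(⟦natNumeral n _⟧ : Free n) = _
    rw [mk_natNumeral, ← numeral_natCast, ← numeral_neg, Int.toNat_of_nonneg (by omega),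
      neg_neg]

theorem mk_polyTerm (p : MvPolynomial (Fin n) ℤ) :
    (⟦polyTerm p⟧ : Free n) = evalSumTerm (fun i => ⟦var i⟧) p := by
  rw [polyTerm, mk_foldr_add, List.map_map, evalSumTerm, ← Finset.sum_map_toList]
  simp only [Function.comp_def, ← mk_intNumeral, ← mk_monTerm]
  rfl

end RTerm

open RTerm in
/-- For nonzero integer polynomials `α` and `β`, `E_wcr,⊥ ⊢ α* · β* = (α·β)*`:
the product of two nonzero polynomial sumterms is provably equal to a polynomial
sumterm. -/
theorem polyTerm_mul (n : ℕ) (α β : MvPolynomial (Fin n) ℤ)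
    (hα : α ≠ 0) (hβ : β ≠ 0) :
    DerivWcr ((polyTerm α).mul (polyTerm β)) (polyTerm (α * β)) := by
  apply Quotient.exact (s := derivWcrSetoid n)
  change (⟦polyTerm α⟧ : Free n) * ⟦polyTerm β⟧ = ⟦polyTerm (α * β)⟧
  rw [mk_polyTerm, mk_polyTerm, mk_polyTerm, WeakCommRing.evalSumTerm_mul,
    WeakCommRing.evalSumTerm_add_zeroMulVars _ (MvPolynomial.vars_union_subset_vars_mul hα hβ)]
end
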